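/- arXiv:1710.10081 — 6 statements merged into one kernel-verified Lean document; each statement's English description precedes it below -/
import Mathlib

section
/- Let M=(M_p)_{p∈ℕ} be a sequence of positive reals with M₀=1 such that lim_{p→∞} (p!^{1−b} m_p)^{1/p} = ∞ for some b>0, where m_p := M_p/p!. Then for each 0 < a ≤ b and all s>0 one has ((ω_M)^a)⋆(s) ≤ ω_{M/G^a}(a^a/s^a) ≤ ((ω_M)^a)⋆(s/e), where (ω_M)^a(t) := ω_M(t^a), (M/G^a)_p := M_p/(p!)^a, and ⋆ denotes the upper Legendre conjugate. -/
open Filter MeasureTheory Set Asymptotics Topology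

noncomputable section

/-- The associated function `ω_M(t) = sup_{p ∈ ℕ} log (t^p / M_p)` for `t > 0`,
extended by `0` at `t = 0` (and on the irrelevant negative half-line). -/
def assocFun (M : ℕ → ℝ) (t : ℝ) : ℝ :=
  if t ≤ 0 then 0 else sSup (Set.range fun p : ℕ => Real.log (t ^ p / M p))

/-- The upper Legendre conjugate `ω⋆(s) = sup_{t ≥ 0} (ω(t) - s t)`. -/
def upperLeg (ω : ℝ → ℝ) (s : ℝ) : ℝ :=
  sSup ((fun t => ω t - s * t) '' Ici 0)

/-- Lower Stirling-type bound: `p log p - p ≤ log p!`. -/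
lemma log_factorial_lb : ∀ p : ℕ, (p : ℝ) * Real.log p - p ≤ Real.log (Nat.factorial p) := by
  intro p
  induction p with
  | zero => simp
  | succ n ih =>
    have hfc : ((Nat.factorial (n+1) : ℕ) : ℝ) = ((n : ℝ) + 1) * (Nat.factorial n : ℝ) := by
      rw [Nat.factorial_succ]; push_cast; ring
    have hfp : (0 : ℝ) < (Nat.factorial n : ℝ) := by exact_mod_cast Nat.factorial_pos n
    rw [hfc, Real.log_mul (by positivity) hfp.ne']
    have key : (n : ℝ) * Real.log ((n:ℝ)+1) ≤ (n : ℝ) * Real.log n + 1 := by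
      rcases Nat.eq_zero_or_pos n with h | h
      · subst h; simp
      · have hn : (0:ℝ) < n := by exact_mod_cast h
        have h1 : Real.log (((n:ℝ)+1)/n) ≤ ((n:ℝ)+1)/n - 1 :=
          Real.log_le_sub_one_of_pos (by positivity)
        rw [Real.log_div (by positivity) hn.ne'] at h1
        have h2 : ((n:ℝ)+1)/n - 1 = 1/n := by field_simp; ring
        rw [h2] at h1
        have h3 := mul_le_mul_of_nonneg_left h1 hn.le
        have h4 : (n:ℝ) * (1/n) = 1 := by field_simp
        nlinarith
    push_cast
    nlinarith
/-- Upper Stirling-type bound: `log p! ≤ p log p`. -/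
lemma log_factorial_ub (p : ℕ) : Real.log (Nat.factorial p) ≤ (p : ℝ) * Real.log p := by
  have h : ((Nat.factorial p : ℕ) : ℝ) ≤ (p : ℝ) ^ p := by
    exact_mod_cast Nat.factorial_le_pow p
  have hfp : (0 : ℝ) < (Nat.factorial p : ℝ) := by exact_mod_cast Nat.factorial_pos p
  calc Real.log (Nat.factorial p) ≤ Real.log ((p:ℝ) ^ p) := Real.log_le_log hfp h
    _ = (p : ℝ) * Real.log p := Real.log_pow p p

/-- Boundedness of the defining family of the associated function. -/
lemma bddAbove_log_range (N : ℕ → ℝ) (hN : ∀ p, 0 < N p)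
    (h : Tendsto (fun p : ℕ => (N p) ^ (1/(p:ℝ))) atTop atTop) (u : ℝ) (hu : 0 ≤ u) :
    BddAbove (Set.range fun p : ℕ => Real.log (u ^ p / N p)) := by
  set c : ℝ := max u 1 with hc
  obtain ⟨n, hn⟩ := eventually_atTop.mp (h.eventually_ge_atTop c)
  have hsub : (Set.range fun p : ℕ => Real.log (u ^ p / N p)) ⊆
      ((fun p : ℕ => Real.log (u ^ p / N p)) '' (Set.Iic n)) ∪ Set.Iic 0 := by
    rintro x ⟨p, rfl⟩
    by_cases hp : p ≤ n
    · exact Or.inl ⟨p, hp, rfl⟩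
    · right
      push_neg at hp
      have hp0 : (p : ℝ) ≠ 0 := by
        have : 0 < p := lt_of_le_of_lt (Nat.zero_le n) hp
        exact_mod_cast this.ne'
      have h1 : c ≤ (N p) ^ (1/(p:ℝ)) := hn p hp.le
      have h2 : c ^ p ≤ ((N p) ^ (1/(p:ℝ))) ^ p :=
        pow_le_pow_left₀ (le_trans zero_le_one (le_max_right u 1)) h1 p
      have hNp : ((N p) ^ (1/(p:ℝ))) ^ p = N p := by
        rw [← Real.rpow_natCast ((N p) ^ (1/(p:ℝ))) p, ← Real.rpow_mul (hN p).le,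
          one_div, inv_mul_cancel₀ hp0, Real.rpow_one]
      have hup : u ^ p ≤ N p := by
        calc u ^ p ≤ c ^ p := pow_le_pow_left₀ hu (le_max_left u 1) p
          _ ≤ _ := hNp ▸ h2
      have : u ^ p / N p ≤ 1 := div_le_one_of_le₀ hup (hN p).le
      exact Set.mem_Iic.mpr (Real.log_nonpos (div_nonneg (pow_nonneg hu p) (hN p).le) this)
  exact BddAbove.mono hsub (((Set.finite_Iic n).image _).bddAbove.union bddAbove_Iic)

/-- The elementary Legendre-type inequality `c log t - s t ≤ c log c - c log s - c`. -/
lemma key_log (c s t : ℝ) (hc : 0 ≤ c) (hs : 0 < s) (ht : 0 < t) :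
    c * Real.log t - s * t ≤ c * Real.log c - c * Real.log s - c := by
  rcases eq_or_lt_of_le hc with h | hc'
  · rw [← h]; simp; positivity
  · have h1 : Real.log t - Real.log (c/s) ≤ t/(c/s) - 1 := by
      have h0 := Real.log_le_sub_one_of_pos (show 0 < t/(c/s) by positivity)
      rwa [Real.log_div ht.ne' (by positivity)] at h0
    have h2 : Real.log (c/s) = Real.log c - Real.log s := Real.log_div hc'.ne' hs.ne'
    have h3 : c * (t/(c/s)) = s * t := by field_simp
    nlinarith [mul_le_mul_of_nonneg_left h1 hc'.le]

/-- For `0 < a ≤ b` and `s > 0`: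
`((ω_M)^a)⋆(s) ≤ ω_{M/G^a}(a^a/s^a) ≤ ((ω_M)^a)⋆(s/e)`, where
`(ω_M)^a(t) = ω_M(t^a)` and `(M/G^a)_p = M_p/(p!)^a`, under the assumption
`lim_p (p!^{1-b} m_p)^{1/p} = ∞` with `m_p = M_p/p!`. -/
theorem stmt5 (M : ℕ → ℝ) (hM0 : M 0 = 1) (hpos : ∀ p, 0 < M p) (b : ℝ) (hb : 0 < b)
    (hlim : Tendsto
      (fun p : ℕ => ((Nat.factorial p : ℝ) ^ (1 - b) * (M p / Nat.factorial p)) ^ (1 / (p : ℝ)))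
      atTop atTop) :
    ∀ a : ℝ, 0 < a → a ≤ b → ∀ s : ℝ, 0 < s →
      upperLeg (fun t => assocFun M (t ^ a)) s ≤
          assocFun (fun p => M p / (Nat.factorial p : ℝ) ^ a) (a ^ a / s ^ a) ∧
        assocFun (fun p => M p / (Nat.factorial p : ℝ) ^ a) (a ^ a / s ^ a) ≤
          upperLeg (fun t => assocFun M (t ^ a)) (s / Real.exp 1) := by
  intro a ha hab s hs
  set N : ℕ → ℝ := fun p => M p / (Nat.factorial p : ℝ) ^ a with hN
  have hfp : ∀ p : ℕ, (0:ℝ) < (Nat.factorial p : ℝ) := fun p => by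
    exact_mod_cast Nat.factorial_pos p
  have hf1 : ∀ p : ℕ, (1:ℝ) ≤ (Nat.factorial p : ℝ) := fun p => by
    exact_mod_cast Nat.one_le_iff_ne_zero.mpr (Nat.factorial_ne_zero p)
  have hNpos : ∀ p, 0 < N p := fun p => div_pos (hpos p) (Real.rpow_pos_of_pos (hfp p) a)
  -- the two limit facts
  have hbase : ∀ p : ℕ, (Nat.factorial p : ℝ) ^ (1 - b) * (M p / Nat.factorial p)
      = M p / (Nat.factorial p : ℝ) ^ b := by
    intro p
    have h1 : (Nat.factorial p : ℝ) ≠ 0 := (hfp p).ne'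
    have h2 : (Nat.factorial p : ℝ) ^ b ≠ 0 := (Real.rpow_pos_of_pos (hfp p) b).ne'
    rw [Real.rpow_sub (hfp p), Real.rpow_one]
    field_simp
  have hN_lim : Tendsto (fun p : ℕ => (N p) ^ (1/(p:ℝ))) atTop atTop := by
    apply tendsto_atTop_mono _ hlim
    intro p
    apply Real.rpow_le_rpow
      (mul_nonneg (Real.rpow_nonneg (hfp p).le _) (div_nonneg (hpos p).le (hfp p).le)) _
      (by positivity)
    rw [hbase p]
    have hexp : (Nat.factorial p : ℝ) ^ a ≤ (Nat.factorial p : ℝ) ^ b :=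
      Real.rpow_le_rpow_of_exponent_le (hf1 p) hab
    exact div_le_div_of_nonneg_left (hpos p).le (Real.rpow_pos_of_pos (hfp p) a) hexp
  have hM_lim : Tendsto (fun p : ℕ => (M p) ^ (1/(p:ℝ))) atTop atTop := by
    apply tendsto_atTop_mono _ hlim
    intro p
    apply Real.rpow_le_rpow
      (mul_nonneg (Real.rpow_nonneg (hfp p).le _) (div_nonneg (hpos p).le (hfp p).le)) _
      (by positivity)
    rw [hbase p]
    exact div_le_self (hpos p).le (Real.one_le_rpow (hf1 p) hb.le)
  -- notation
  have hsE : (0:ℝ) < s / Real.exp 1 := by positivity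
  -- the family defining `assocFun N u` for `u = a^a / s'^a`
  set F : ℝ → ℕ → ℝ := fun s' p => Real.log ((a ^ a / s' ^ a) ^ p / N p) with hF
  have hu : ∀ s' : ℝ, 0 < s' → (0:ℝ) < a ^ a / s' ^ a := fun s' hs' => by
    exact div_pos (Real.rpow_pos_of_pos ha a) (Real.rpow_pos_of_pos hs' a)
  have hBddF : ∀ s' : ℝ, 0 < s' → BddAbove (Set.range (F s')) := fun s' hs' =>
    bddAbove_log_range N hNpos hN_lim _ (hu s' hs').le
  have hlogu : ∀ s' : ℝ, 0 < s' →
      Real.log (a ^ a / s' ^ a) = a * Real.log a - a * Real.log s' := by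
    intro s' hs'
    rw [Real.log_div (Real.rpow_pos_of_pos ha a).ne' (Real.rpow_pos_of_pos hs' a).ne',
      Real.log_rpow ha, Real.log_rpow hs']
  have hFval : ∀ s' : ℝ, 0 < s' → ∀ p : ℕ, F s' p =
      (p : ℝ) * (a * Real.log a - a * Real.log s') + a * Real.log (Nat.factorial p)
        - Real.log (M p) := by
    intro s' hs' p
    rw [hF]
    simp only
    rw [Real.log_div (pow_ne_zero _ (hu s' hs').ne') (hNpos p).ne', Real.log_pow,
      hlogu s' hs']
    rw [hN]
    simp only
    rw [Real.log_div (hpos p).ne' (Real.rpow_pos_of_pos (hfp p) a).ne',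
      Real.log_rpow (hfp p)]
    ring
  have hF0 : ∀ s' : ℝ, 0 < s' → F s' 0 = 0 := by
    intro s' hs'
    rw [hFval s' hs' 0]
    simp [hM0]
  -- value of `ω t` family for `t > 0`
  have hgval : ∀ t : ℝ, 0 < t → ∀ q : ℕ,
      Real.log ((t ^ a) ^ q / M q) = a * (q : ℝ) * Real.log t - Real.log (M q) := by
    intro t ht q
    rw [Real.log_div (pow_ne_zero _ (Real.rpow_pos_of_pos ht a).ne') (hpos q).ne',
      Real.log_pow, Real.log_rpow ht]
    ring
  have hω_pos : ∀ t : ℝ, 0 < t → assocFun M (t ^ a) =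
      sSup (Set.range fun q : ℕ => Real.log ((t ^ a) ^ q / M q)) := by
    intro t ht
    rw [assocFun, if_neg (not_le.mpr (Real.rpow_pos_of_pos ht a))]
  have hω0 : assocFun M ((0:ℝ) ^ a) = 0 := by
    rw [Real.zero_rpow ha.ne', assocFun, if_pos le_rfl]
  have hBddM : ∀ t : ℝ, 0 < t →
      BddAbove (Set.range fun q : ℕ => Real.log ((t ^ a) ^ q / M q)) := by
    intro t ht
    exact bddAbove_log_range M hpos hM_lim _ (Real.rpow_pos_of_pos ht a).le
  -- Key pointwise inequality (part 1, parameterized by s')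
  have part1 : ∀ s' : ℝ, 0 < s' →
      ∀ x ∈ (fun t => assocFun M (t ^ a) - s' * t) '' Ici 0, x ≤ sSup (Set.range (F s')) := by
    intro s' hs' x hx
    obtain ⟨t, ht0, rfl⟩ := hx
    show assocFun M (t ^ a) - s' * t ≤ sSup (Set.range (F s'))
    have hF0le : (0:ℝ) ≤ sSup (Set.range (F s')) := by
      have := le_csSup (hBddF s' hs') (Set.mem_range_self 0)
      rwa [hF0 s' hs'] at this
    rcases eq_or_lt_of_le (Set.mem_Ici.mp ht0) with h | ht
    · rw [← h, hω0]; simpa using hF0le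
    · rw [hω_pos t ht]
      rw [sub_le_iff_le_add]
      apply csSup_le (Set.range_nonempty _)
      rintro y ⟨q, rfl⟩
      have hq : Real.log ((t ^ a) ^ q / M q) - s' * t ≤ F s' q := by
        rw [hgval t ht q, hFval s' hs' q]
        have hkey := key_log (a * q) s' t (by positivity) hs' ht
        have hlb := mul_le_mul_of_nonneg_left (log_factorial_lb q) ha.le
        rcases Nat.eq_zero_or_pos q with hq0 | hq0
        · subst hq0; simp only [Nat.cast_zero, mul_zero, zero_mul, Nat.factorial_zero,
            Nat.cast_one, Real.log_one]
          nlinarith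
        · have hqR : (0:ℝ) < q := by exact_mod_cast hq0
          have hmul : Real.log (a * q) = Real.log a + Real.log q :=
            Real.log_mul ha.ne' hqR.ne'
          rw [hmul] at hkey
          nlinarith
      have := le_csSup (hBddF s' hs') (Set.mem_range_self q)
      linarith
  -- part 2 per index
  have hBddS : BddAbove ((fun t => assocFun M (t ^ a) - (s / Real.exp 1) * t) '' Ici 0) :=
    ⟨sSup (Set.range (F (s / Real.exp 1))), fun x hx => part1 _ hsE x hx⟩
  have hSne : ((fun t => assocFun M (t ^ a) - (s / Real.exp 1) * t) '' Ici 0).Nonempty :=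
    ⟨_, Set.mem_image_of_mem _ (Set.self_mem_Ici)⟩
  have part2 : ∀ p : ℕ, F s p ≤
      sSup ((fun t => assocFun M (t ^ a) - (s / Real.exp 1) * t) '' Ici 0) := by
    intro p
    rcases Nat.eq_zero_or_pos p with hp0 | hp0
    · subst hp0
      rw [hF0 s hs]
      have hmem : (0:ℝ) ∈ (fun t => assocFun M (t ^ a) - (s / Real.exp 1) * t) '' Ici 0 := by
        refine ⟨0, Set.self_mem_Ici, ?_⟩
        show assocFun M ((0:ℝ) ^ a) - s / Real.exp 1 * 0 = 0
        rw [hω0]; ring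
      exact le_csSup hBddS hmem
    · have hpR : (0:ℝ) < p := by exact_mod_cast hp0
      set t : ℝ := Real.exp 1 * a * p / s with htdef
      have htpos : 0 < t := by positivity
      have hmem : assocFun M (t ^ a) - (s / Real.exp 1) * t ∈
          (fun t => assocFun M (t ^ a) - (s / Real.exp 1) * t) '' Ici 0 :=
        Set.mem_image_of_mem _ (Set.mem_Ici.mpr htpos.le)
      refine le_trans ?_ (le_csSup hBddS hmem)
      have hωge : Real.log ((t ^ a) ^ p / M p) ≤ assocFun M (t ^ a) := by
        rw [hω_pos t htpos]
        exact le_csSup (hBddM t htpos) (Set.mem_range_self p)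
      have hst : (s / Real.exp 1) * t = a * p := by
        rw [htdef]; field_simp
      have hlogt : Real.log t = 1 + Real.log a + Real.log p - Real.log s := by
        rw [htdef, Real.log_div (by positivity) hs.ne',
          Real.log_mul (by positivity) hpR.ne',
          Real.log_mul (Real.exp_pos 1).ne' ha.ne', Real.log_exp]
      have hkey : F s p ≤ Real.log ((t ^ a) ^ p / M p) - a * p := by
        rw [hFval s hs p, hgval t htpos p, hlogt]
        have hub := mul_le_mul_of_nonneg_left (log_factorial_ub p) ha.le
        nlinarith
      rw [hst]
      linarith
  -- assemble
  have hEq : assocFun (fun p => M p / (Nat.factorial p : ℝ) ^ a) (a ^ a / s ^ a) =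
      sSup (Set.range (F s)) := by
    rw [assocFun, if_neg (not_le.mpr (hu s hs))]
  constructor
  · rw [upperLeg, hEq]
    apply csSup_le ⟨_, Set.mem_image_of_mem _ Set.self_mem_Ici⟩
    exact part1 s hs
  · rw [upperLeg, hEq]
    exact csSup_le (Set.range_nonempty _) (by rintro y ⟨p, rfl⟩; exact part2 p)
end
end

section
/- Let ω be a normalized weight function satisfying (ω₃), and let W^x_p := exp((1/x)φ*_ω(xp)) for x>0, p∈ℕ. Then for all x>0 and all t≥0 one has x·ω_{W^x}(t) ≤ ω(t). If ω moreover satisfies (ω₄), then for every x>0 there exists C_x>0 such that for all t≥0: ω(t) ≤ 2x·ω_{W^x}(t) + C_x; in particular ω and ω_{W^x} are equivalent weight functions. -/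
open Filter MeasureTheory Set Asymptotics Topology

noncomputable section

/-- A weight function: continuous and nondecreasing on `[0,∞)`, vanishing at `0`,
and tending to `∞` at `∞`. -/
def IsWeightFun (ω : ℝ → ℝ) : Prop :=
  ContinuousOn ω (Ici 0) ∧ MonotoneOn ω (Ici 0) ∧ ω 0 = 0 ∧ Tendsto ω atTop atTop

/-- A weight function is normalized if it vanishes on `[0,1]`. -/
def IsNormalized (ω : ℝ → ℝ) : Prop :=
  ∀ t ∈ Icc (0 : ℝ) 1, ω t = 0

/-- The Legendre-Fenchel-Young conjugate `φ*_ω(x) = sup_{y ≥ 0} (x y - ω(e^y))`. -/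
def legConj (ω : ℝ → ℝ) (x : ℝ) : ℝ :=
  sSup ((fun y => x * y - ω (Real.exp y)) '' Ici 0)

/-- The weight matrix associated with `ω`: `W^x_p = exp((1/x) φ*_ω(x p))`. -/
def Wmat (ω : ℝ → ℝ) (x : ℝ) (p : ℕ) : ℝ :=
  Real.exp ((1 / x) * legConj ω (x * p))

section Aux

variable {ω : ℝ → ℝ}

lemma omega_nonneg (hω : IsWeightFun ω) {t : ℝ} (ht : 0 ≤ t) : 0 ≤ ω t :=
  hω.2.2.1 ▸ hω.2.1 (self_mem_Ici) ht ht

lemma phi_mono (hω : IsWeightFun ω) : Monotone (fun y => ω (Real.exp y)) :=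
  fun _ _ h => hω.2.1 (Real.exp_pos _).le (Real.exp_pos _).le (Real.exp_le_exp.mpr h)

lemma legConj_bddAbove (hω : IsWeightFun ω)
    (h3 : (fun t => Real.log t) =o[atTop] ω) {z : ℝ} (hz : 0 ≤ z) :
    BddAbove ((fun y => z * y - ω (Real.exp y)) '' Ici 0) := by
  obtain ⟨a, ha⟩ := Filter.eventually_atTop.mp
    (isLittleO_iff.mp h3 (c := 1 / (z + 1)) (by positivity))
  set B := max (Real.log (max a 1)) 0 with hB
  have key : ∀ y : ℝ, B ≤ y → z * y - ω (Real.exp y) ≤ 0 := by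
    intro y hy
    have hy0 : 0 ≤ y := le_trans (le_max_right _ _) hy
    have hb : max a 1 ≤ Real.exp y := by
      rw [← Real.exp_log (lt_of_lt_of_le one_pos (le_max_right a 1))]
      exact Real.exp_le_exp.mpr (le_trans (le_max_left _ _) hy)
    have h := ha (Real.exp y) (le_trans (le_max_left a 1) hb)
    rw [Real.log_exp] at h
    have hωe : 0 ≤ ω (Real.exp y) := omega_nonneg hω (Real.exp_pos _).le
    rw [Real.norm_eq_abs, Real.norm_eq_abs, abs_of_nonneg hy0, abs_of_nonneg hωe] at h
    have hz1 : 0 < z + 1 := by linarith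
    have h' : z * y ≤ z * (1 / (z + 1) * ω (Real.exp y)) := mul_le_mul_of_nonneg_left h hz
    have e : z * (1 / (z + 1) * ω (Real.exp y)) = z / (z + 1) * ω (Real.exp y) := by ring
    have hfrac : z / (z + 1) ≤ 1 := (div_le_one hz1).mpr (by linarith)
    have h'' : z / (z + 1) * ω (Real.exp y) ≤ 1 * ω (Real.exp y) :=
      mul_le_mul_of_nonneg_right hfrac hωe
    rw [e] at h'
    linarith
  have hsub : Ici (0:ℝ) ⊆ Icc 0 B ∪ Ici B := by
    intro y hy
    rcases le_or_gt y B with h | h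
    · exact Or.inl ⟨hy, h⟩
    · exact Or.inr h.le
  refine BddAbove.mono (Set.image_mono hsub) ?_
  rw [Set.image_union]
  refine BddAbove.union ?_ ⟨0, ?_⟩
  · exact (isCompact_Icc.image_of_continuousOn
      (((continuous_const.mul continuous_id).continuousOn).sub
        (hω.1.comp Real.continuous_exp.continuousOn
          (fun y _ => (Real.exp_pos y).le)))).bddAbove
  · rintro v ⟨y, hy, rfl⟩
    exact key y hy

lemma legConj_ge (hω : IsWeightFun ω) (h3 : (fun t => Real.log t) =o[atTop] ω)
    {z y : ℝ} (hz : 0 ≤ z) (hy : 0 ≤ y) :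
    z * y - ω (Real.exp y) ≤ legConj ω z :=
  le_csSup (legConj_bddAbove hω h3 hz) ⟨y, hy, rfl⟩

lemma legConj_nonneg (hω : IsWeightFun ω) (hn : IsNormalized ω)
    (h3 : (fun t => Real.log t) =o[atTop] ω) {z : ℝ} (hz : 0 ≤ z) :
    0 ≤ legConj ω z := by
  have h := legConj_ge hω h3 hz (le_refl 0)
  simpa [Real.exp_zero, hn 1 ⟨zero_le_one, le_rfl⟩] using h

lemma legConj_mono (hω : IsWeightFun ω) (hn : IsNormalized ω)
    (h3 : (fun t => Real.log t) =o[atTop] ω) {a b : ℝ} (ha : 0 ≤ a) (hab : a ≤ b) :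
    legConj ω a ≤ legConj ω b := by
  refine Real.sSup_le ?_ (legConj_nonneg hω hn h3 (ha.trans hab))
  rintro _ ⟨y, hy, rfl⟩
  have h1 : a * y ≤ b * y := mul_le_mul_of_nonneg_right hab hy
  have h2 := legConj_ge hω h3 (ha.trans hab) (hy : (0:ℝ) ≤ y)
  simp only [] at *
  linarith

lemma legConj_zero (hω : IsWeightFun ω) (hn : IsNormalized ω)
    (h3 : (fun t => Real.log t) =o[atTop] ω) : legConj ω 0 = 0 := by
  refine le_antisymm (Real.sSup_le ?_ le_rfl) (legConj_nonneg hω hn h3 le_rfl)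
  rintro _ ⟨y, hy, rfl⟩
  have := omega_nonneg hω (Real.exp_pos y).le
  simp only []
  linarith

lemma assoc_elem {x t : ℝ} (ht : 0 < t) (p : ℕ) :
    Real.log (t ^ p / Wmat ω x p) = p * Real.log t - (1/x) * legConj ω (x * p) := by
  rw [Wmat, Real.log_div (pow_ne_zero p ht.ne') (Real.exp_ne_zero _), Real.log_pow,
    Real.log_exp]

lemma key1 (hω : IsWeightFun ω) (hn : IsNormalized ω)
    (h3 : (fun t => Real.log t) =o[atTop] ω) {x t : ℝ} (hx : 0 < x) (ht : 0 < t) (p : ℕ) :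
    x * ((p : ℝ) * Real.log t - (1/x) * legConj ω (x * p)) ≤ ω t := by
  have hzp : (0:ℝ) ≤ x * p := by positivity
  have hL0 := legConj_nonneg hω hn h3 hzp
  have hωt := omega_nonneg hω ht.le
  have e : x * ((p : ℝ) * Real.log t - (1/x) * legConj ω (x * p))
      = x * p * Real.log t - legConj ω (x * p) := by
    field_simp
  rw [e]
  rcases le_or_gt t 1 with h1 | h1
  · have hlog : Real.log t ≤ 0 := Real.log_nonpos ht.le h1
    have h2 : x * (p : ℝ) * Real.log t ≤ 0 := mul_nonpos_of_nonneg_of_nonpos hzp hlog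
    linarith
  · have hs : 0 ≤ Real.log t := Real.log_nonneg h1.le
    have h := legConj_ge hω h3 hzp hs
    rw [Real.exp_log ht] at h
    linarith

lemma assoc_bdd (hω : IsWeightFun ω) (hn : IsNormalized ω)
    (h3 : (fun t => Real.log t) =o[atTop] ω) {x t : ℝ} (hx : 0 < x) (ht : 0 < t) :
    BddAbove (Set.range fun p : ℕ => Real.log (t ^ p / Wmat ω x p)) := by
  refine ⟨ω t / x, ?_⟩
  rintro _ ⟨p, rfl⟩
  show Real.log (t ^ p / Wmat ω x p) ≤ ω t / x
  rw [assoc_elem ht, le_div_iff₀ hx, mul_comm]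
  exact key1 hω hn h3 hx ht p

lemma assoc_le (hω : IsWeightFun ω) (hn : IsNormalized ω)
    (h3 : (fun t => Real.log t) =o[atTop] ω) {x t : ℝ} (hx : 0 < x) (ht : 0 ≤ t) :
    x * assocFun (Wmat ω x) t ≤ ω t := by
  rcases le_or_gt t 0 with h0 | h0
  · rw [assocFun, if_pos h0, mul_zero]
    exact omega_nonneg hω ht
  · rw [assocFun, if_neg (not_le.mpr h0)]
    have hbound : sSup (Set.range fun p : ℕ => Real.log (t ^ p / Wmat ω x p)) ≤ ω t / x := by
      refine Real.sSup_le ?_ (div_nonneg (omega_nonneg hω ht) hx.le)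
      rintro _ ⟨p, rfl⟩
      show Real.log (t ^ p / Wmat ω x p) ≤ ω t / x
      rw [assoc_elem h0, le_div_iff₀ hx, mul_comm]
      exact key1 hω hn h3 hx h0 p
    calc x * sSup (Set.range fun p : ℕ => Real.log (t ^ p / Wmat ω x p))
        ≤ x * (ω t / x) := mul_le_mul_of_nonneg_left hbound hx.le
      _ = ω t := by field_simp

lemma assoc_nonneg (hω : IsWeightFun ω) (hn : IsNormalized ω)
    (h3 : (fun t => Real.log t) =o[atTop] ω) {x t : ℝ} (hx : 0 < x) :
    0 ≤ assocFun (Wmat ω x) t := by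
  rcases le_or_gt t 0 with h0 | h0
  · rw [assocFun, if_pos h0]
  · rw [assocFun, if_neg (not_le.mpr h0)]
    refine Real.sSup_nonneg' ⟨_, ⟨0, rfl⟩, ?_⟩
    simp [Wmat, legConj_zero hω hn h3]

lemma assoc_ge_one (hω : IsWeightFun ω) (hn : IsNormalized ω)
    (h3 : (fun t => Real.log t) =o[atTop] ω) {x t : ℝ} (hx : 0 < x) (ht : 0 < t) :
    Real.log t - (1/x) * legConj ω x ≤ assocFun (Wmat ω x) t := by
  rw [assocFun, if_neg (not_le.mpr ht)]
  have h := le_csSup (assoc_bdd hω hn h3 hx ht) ⟨1, rfl⟩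
  simp only [] at h
  rwa [assoc_elem ht, Nat.cast_one, one_mul, mul_one] at h

lemma subgrad (hω : IsWeightFun ω)
    (hc : ConvexOn ℝ univ (fun y => ω (Real.exp y))) (s : ℝ) :
    ∃ z : ℝ, 0 ≤ z ∧ ∀ y : ℝ, ω (Real.exp s) + z * (y - s) ≤ ω (Real.exp y) := by
  set φ : ℝ → ℝ := fun y => ω (Real.exp y) with hφ
  set S : Set ℝ := (fun y => (φ s - φ y) / (s - y)) '' Iio s with hS
  have hmono : Monotone φ := phi_mono hω
  have hbdd : BddAbove S := by
    refine ⟨φ (s+1) - φ s, ?_⟩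
    rintro _ ⟨y, hy, rfl⟩
    have h := hc.slope_mono_adjacent (mem_univ y) (mem_univ (s+1)) hy (lt_add_one s)
    simpa using h
  have hne : ((φ s - φ (s-1)) / (s - (s-1))) ∈ S := ⟨s-1, by simp, rfl⟩
  set z := sSup S with hz
  have hz0 : 0 ≤ z := by
    have h := le_csSup hbdd hne
    have h2 : 0 ≤ (φ s - φ (s-1)) / (s - (s-1)) := by
      have := hmono (show s - 1 ≤ s by linarith)
      have e : s - (s-1) = 1 := by ring
      rw [e, div_one]; linarith
    linarith
  refine ⟨z, hz0, fun y => ?_⟩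
  rcases lt_trichotomy y s with hlt | heq | hgt
  · have h := le_csSup hbdd ⟨y, hlt, rfl⟩
    have hsy : 0 < s - y := by linarith
    rw [div_le_iff₀ hsy] at h
    nlinarith
  · subst heq; simp
  · have h : z ≤ (φ y - φ s) / (y - s) := by
      refine csSup_le ⟨_, hne⟩ ?_
      rintro _ ⟨y', hy', rfl⟩
      exact hc.slope_mono_adjacent (mem_univ y') (mem_univ y) hy' hgt
    have hys : 0 < y - s := by linarith
    rw [le_div_iff₀ hys] at h
    nlinarith

lemma conj_le (hω : IsWeightFun ω) (hn : IsNormalized ω)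
    (h3 : (fun t => Real.log t) =o[atTop] ω) {s z : ℝ} (hz : 0 ≤ z)
    (hsub : ∀ y : ℝ, ω (Real.exp s) + z * (y - s) ≤ ω (Real.exp y)) :
    legConj ω z ≤ z * s - ω (Real.exp s) := by
  have h0 := hsub 0
  rw [Real.exp_zero, hn 1 ⟨zero_le_one, le_rfl⟩] at h0
  refine Real.sSup_le ?_ (by nlinarith)
  rintro _ ⟨y, hy, rfl⟩
  have := hsub y
  simp only []
  nlinarith

end Aux

/-- For a normalized weight `ω` with `(ω₃)`: `x ω_{W^x}(t) ≤ ω(t)` for all `x > 0`,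
`t ≥ 0`; and if `ω` also satisfies `(ω₄)`, then for every `x > 0` there is `C > 0`
with `ω(t) ≤ 2x ω_{W^x}(t) + C` for all `t ≥ 0`; in particular `ω` and `ω_{W^x}`
are equivalent weight functions. -/
theorem stmt6 (ω : ℝ → ℝ) (hω : IsWeightFun ω) (hn : IsNormalized ω)
    (h3 : (fun t => Real.log t) =o[atTop] ω) :
    (∀ x : ℝ, 0 < x → ∀ t : ℝ, 0 ≤ t → x * assocFun (Wmat ω x) t ≤ ω t) ∧
    (ConvexOn ℝ univ (fun t => ω (Real.exp t)) →
      ∀ x : ℝ, 0 < x →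
        (∃ C : ℝ, 0 < C ∧ ∀ t : ℝ, 0 ≤ t → ω t ≤ 2 * x * assocFun (Wmat ω x) t + C) ∧
        ω =O[atTop] assocFun (Wmat ω x) ∧ assocFun (Wmat ω x) =O[atTop] ω) := by
  constructor
  · intro x hx t ht
    exact assoc_le hω hn h3 hx ht
  · intro hc x hx
    have hLx : 0 ≤ legConj ω x := legConj_nonneg hω hn h3 hx.le
    -- the main estimate
    have main : ∀ t : ℝ, 0 ≤ t →
        ω t ≤ 2 * x * assocFun (Wmat ω x) t + (legConj ω x + 1) := by
      intro t ht
      have hA : 0 ≤ assocFun (Wmat ω x) t := assoc_nonneg hω hn h3 hx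
      rcases le_or_gt t 1 with h1 | h1
      · rw [hn t ⟨ht, h1⟩]
        nlinarith
      · have ht0 : 0 < t := lt_trans one_pos h1
        set s := Real.log t with hsdef
        have hs : 0 ≤ s := Real.log_nonneg h1.le
        obtain ⟨z, hz, hsub⟩ := subgrad hω hc s
        have hconj := conj_le hω hn h3 hz hsub
        rw [Real.exp_log ht0] at hconj
        set p := ⌊z / x⌋₊ with hp
        have hp1 : (p : ℝ) ≤ z / x := Nat.floor_le (div_nonneg hz hx.le)
        have hp2 : z / x < p + 1 := Nat.lt_floor_add_one _
        have hxp : x * p ≤ z := by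
          rw [← le_div_iff₀' hx]; exact hp1
        have hzx : z < x * p + x := by
          have := (div_lt_iff₀ hx).mp hp2
          linarith [this]
        have hmonoL : legConj ω (x * p) ≤ legConj ω z :=
          legConj_mono hω hn h3 (by positivity) hxp
        set A := assocFun (Wmat ω x) t with hAdef
        have f1 : (p : ℝ) * s - (1/x) * legConj ω (x * p) ≤ A := by
          rw [hAdef, assocFun, if_neg (not_le.mpr ht0)]
          have h := le_csSup (assoc_bdd hω hn h3 hx ht0) ⟨p, rfl⟩
          simp only [] at h
          rwa [assoc_elem ht0] at h
        have f2 : s - (1/x) * legConj ω x ≤ A := assoc_ge_one hω hn h3 hx ht0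
        have g1 : x * ((p : ℝ) * s) - legConj ω (x * p) ≤ x * A := by
          have h := mul_le_mul_of_nonneg_left f1 hx.le
          have e : x * ((p : ℝ) * s - 1/x * legConj ω (x * p))
              = x * ((p : ℝ) * s) - legConj ω (x * p) := by field_simp
          rw [e] at h; exact h
        have g2 : x * s - legConj ω x ≤ x * A := by
          have h := mul_le_mul_of_nonneg_left f2 hx.le
          have e : x * (s - 1/x * legConj ω x) = x * s - legConj ω x := by field_simp
          rw [e] at h; exact h
        have g3 : (z - x) * s ≤ x * ((p : ℝ) * s) := by
          have := mul_le_mul_of_nonneg_right (show z - x ≤ x * (p : ℝ) by linarith) hs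
          nlinarith
        nlinarith
    refine ⟨⟨legConj ω x + 1, by linarith, main⟩, ?_, ?_⟩
    · rw [isBigO_iff]
      refine ⟨2 * x + 1, ?_⟩
      rw [Filter.eventually_atTop]
      refine ⟨max (Real.exp ((legConj ω x + 1) + (1/x) * legConj ω x)) 1, fun t ht => ?_⟩
      have ht1 : (1:ℝ) ≤ t := le_trans (le_max_right _ _) ht
      have ht0 : 0 < t := lt_of_lt_of_le one_pos ht1
      have hlog : (legConj ω x + 1) + (1/x) * legConj ω x ≤ Real.log t := by
        calc (legConj ω x + 1) + (1/x) * legConj ω x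
            = Real.log (Real.exp ((legConj ω x + 1) + (1/x) * legConj ω x)) :=
              (Real.log_exp _).symm
          _ ≤ Real.log t :=
              Real.log_le_log (Real.exp_pos _) (le_trans (le_max_left _ _) ht)
      have hAC : legConj ω x + 1 ≤ assocFun (Wmat ω x) t := by
        have := assoc_ge_one hω hn h3 hx ht0
        linarith
      have hA : 0 ≤ assocFun (Wmat ω x) t := assoc_nonneg hω hn h3 hx
      have hm := main t ht0.le
      rw [Real.norm_eq_abs, Real.norm_eq_abs, abs_of_nonneg (omega_nonneg hω ht0.le),
        abs_of_nonneg hA]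
      nlinarith
    · rw [isBigO_iff]
      refine ⟨1 / x, ?_⟩
      rw [Filter.eventually_atTop]
      refine ⟨1, fun t ht => ?_⟩
      have ht0 : (0:ℝ) ≤ t := le_trans zero_le_one ht
      have hA : 0 ≤ assocFun (Wmat ω x) t := assoc_nonneg hω hn h3 hx
      have h := assoc_le hω hn h3 hx ht0
      rw [Real.norm_eq_abs, Real.norm_eq_abs, abs_of_nonneg hA,
        abs_of_nonneg (omega_nonneg hω ht0)]
      rw [div_mul_eq_mul_div, one_mul, le_div_iff₀ hx, mul_comm]
      exact h
end
end

section
/- Let M=(M_p)_{p∈ℕ} be a sequence of positive reals with M₀=1 such that lim_{p→∞} m_p^{1/p} = ∞, where m_p := M_p/p!. Define N_p := sup_{t>0} t^p / exp((ω_m^ι)_⋆(t)), where (ω_m^ι)_⋆ is the lower Legendre conjugate of t ↦ ω_m(1/t). Then N_p = (p^p/e^p)·m_p^{lc} for every p∈ℕ; consequently N is equivalent to the sequence (p!·m_p^{lc})_{p∈ℕ} in the sense that each is bounded by a constant to the p-th power times the other. -/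
open Filter MeasureTheory Set Asymptotics Topology

noncomputable section

/-- The lower Legendre conjugate `h_⋆(t) = inf_{s > 0} (h(s) + t s)`. -/
def lowerLeg (h : ℝ → ℝ) (t : ℝ) : ℝ :=
  sInf ((fun s => h s + t * s) '' Ioi 0)

/-- The log-convex regularization `m_p^{lc} = sup_{t > 0} t^p / exp(ω_m(t))`. -/
def logConvexReg (m : ℕ → ℝ) (p : ℕ) : ℝ :=
  sSup ((fun t => t ^ p / Real.exp (assocFun m t)) '' Ioi 0)

/-- The sequence `m_p = M_p / p!`. -/
def mSeq (M : ℕ → ℝ) (p : ℕ) : ℝ := M p / Nat.factorial p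

/-- The sequence `N_p = sup_{t > 0} t^p / exp((ω_m^ι)_⋆(t))`. -/
def NSeq (M : ℕ → ℝ) (p : ℕ) : ℝ :=
  sSup ((fun t => t ^ p / Real.exp (lowerLeg (fun s => assocFun (mSeq M) (1 / s)) t)) '' Ioi 0)

private lemma aux_bddAbove {f : ℕ → ℝ} (h : ∀ᶠ p in atTop, f p ≤ 0) :
    BddAbove (Set.range f) := by
  obtain ⟨p0, hp0⟩ := eventually_atTop.mp h
  refine ⟨max 0 ((Finset.range (p0 + 1)).sup' (by simp) f), ?_⟩
  rintro y ⟨p, rfl⟩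
  by_cases hp : p ≤ p0
  · exact le_max_of_le_right (Finset.le_sup' f (Finset.mem_range.mpr (by omega)))
  · exact le_max_of_le_left (hp0 p (by omega))

private lemma aux_key (p : ℕ) {x : ℝ} (hx : 0 < x) :
    (p : ℝ) * Real.log x - x ≤ (p : ℝ) * Real.log p - p := by
  rcases Nat.eq_zero_or_pos p with rfl | hp
  · simp; linarith
  · have hp' : (0 : ℝ) < p := Nat.cast_pos.mpr hp
    have h1 := Real.log_le_sub_one_of_pos (div_pos hx hp')
    have hlog : Real.log (x / p) = Real.log x - Real.log p := Real.log_div hx.ne' hp'.ne'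
    rw [hlog] at h1
    have h2 : (p : ℝ) * (Real.log x - Real.log p) ≤ (p : ℝ) * (x / p - 1) :=
      mul_le_mul_of_nonneg_left h1 hp'.le
    have h3 : (p : ℝ) * (x / p) = x := by field_simp
    nlinarith

private lemma aux_pow_le_exp_mul_factorial (p : ℕ) :
    (p : ℝ) ^ p ≤ Real.exp p * (Nat.factorial p : ℝ) := by
  have h := Real.sum_le_exp_of_nonneg (x := (p : ℝ)) (Nat.cast_nonneg p) (p + 1)
  have h1 : (p : ℝ) ^ p / (Nat.factorial p : ℝ) ≤
      ∑ i ∈ Finset.range (p + 1), (p : ℝ) ^ i / (Nat.factorial i : ℝ) :=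
    Finset.single_le_sum (f := fun i => (p : ℝ) ^ i / (Nat.factorial i : ℝ))
      (fun i _ => by positivity) (Finset.self_mem_range_succ p)
  have h2 : (p : ℝ) ^ p / (Nat.factorial p : ℝ) ≤ Real.exp p := le_trans h1 h
  have hf : (0 : ℝ) < (Nat.factorial p : ℝ) := by exact_mod_cast Nat.factorial_pos p
  rw [div_le_iff₀ hf] at h2
  linarith

private lemma aux_cseq_pos (p : ℕ) : (0 : ℝ) < (p : ℝ) ^ p / Real.exp p := by
  rcases Nat.eq_zero_or_pos p with rfl | hp
  · norm_num
  · exact div_pos (pow_pos (by exact_mod_cast hp) p) (Real.exp_pos _)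

private lemma aux_pow_pos (p : ℕ) : (0 : ℝ) < (p : ℝ) ^ p := by
  rcases Nat.eq_zero_or_pos p with rfl | hp
  · norm_num
  · exact pow_pos (by exact_mod_cast hp) p

private lemma aux_log_cseq (p : ℕ) :
    Real.log ((p : ℝ) ^ p / Real.exp p) = (p : ℝ) * Real.log p - p := by
  rw [Real.log_div (ne_of_gt (aux_pow_pos p)) (Real.exp_ne_zero _), Real.log_pow, Real.log_exp]

/-- With `N_p = sup_{t>0} t^p/exp((ω_m^ι)_⋆(t))` one has `N_p = (p^p/e^p) m_p^{lc}`;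
consequently `N` is equivalent to `(p! m_p^{lc})_p`. -/
theorem stmt8 (M : ℕ → ℝ) (hpos : ∀ p, 0 < M p) (hM0 : M 0 = 1)
    (hlim : Tendsto (fun p : ℕ => mSeq M p ^ (1 / (p : ℝ))) atTop atTop) :
    (∀ p : ℕ, NSeq M p = (p : ℝ) ^ p / Real.exp p * logConvexReg (mSeq M) p) ∧
    ∃ C : ℝ, 1 ≤ C ∧ ∀ p : ℕ,
      NSeq M p ≤ C ^ p * ((Nat.factorial p : ℝ) * logConvexReg (mSeq M) p) ∧
      (Nat.factorial p : ℝ) * logConvexReg (mSeq M) p ≤ C ^ p * NSeq M p := by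
  have hm : ∀ q, 0 < mSeq M q := fun q =>
    div_pos (hpos q) (by exact_mod_cast Nat.factorial_pos q)
  have hm0 : mSeq M 0 = 1 := by simp [mSeq, hM0]
  -- eventual bound on log terms
  have hev : ∀ t : ℝ, 0 < t → ∀ᶠ p : ℕ in atTop, Real.log (t ^ p / mSeq M p) ≤ 0 := by
    intro t ht
    filter_upwards [hlim.eventually_ge_atTop t, eventually_ge_atTop 1] with p hp hp1
    have hp0 : ((p : ℝ)) ≠ 0 := by positivity
    have htp : t ^ p ≤ mSeq M p := by
      have h1 : t ^ p ≤ (mSeq M p ^ (1 / (p : ℝ))) ^ p := pow_le_pow_left₀ ht.le hp p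
      rwa [← Real.rpow_natCast (mSeq M p ^ (1 / (p : ℝ))) p, ← Real.rpow_mul (hm p).le,
        one_div, inv_mul_cancel₀ hp0, Real.rpow_one] at h1
    exact Real.log_nonpos (div_nonneg (by positivity) (hm p).le) ((div_le_one (hm p)).mpr htp)
  have hbdd : ∀ t : ℝ, 0 < t →
      BddAbove (Set.range fun p : ℕ => Real.log (t ^ p / mSeq M p)) :=
    fun t ht => aux_bddAbove (hev t ht)
  have hωge : ∀ t : ℝ, 0 < t → ∀ p : ℕ,
      Real.log (t ^ p / mSeq M p) ≤ assocFun (mSeq M) t := by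
    intro t ht p
    rw [assocFun, if_neg (not_le.mpr ht)]
    exact le_csSup (hbdd t ht) ⟨p, rfl⟩
  have hω0 : ∀ t : ℝ, 0 ≤ assocFun (mSeq M) t := by
    intro t
    rcases le_or_gt t 0 with h | h
    · rw [assocFun, if_pos h]
    · simpa [hm0] using hωge t h 0
  -- exp of assoc bound
  have hωexp : ∀ t : ℝ, 0 < t → ∀ p : ℕ,
      t ^ p ≤ mSeq M p * Real.exp (assocFun (mSeq M) t) := by
    intro t ht p
    have h2 : t ^ p / mSeq M p ≤ Real.exp (assocFun (mSeq M) t) := by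
      calc t ^ p / mSeq M p = Real.exp (Real.log (t ^ p / mSeq M p)) :=
            (Real.exp_log (div_pos (pow_pos ht p) (hm p))).symm
        _ ≤ _ := Real.exp_le_exp.mpr (hωge t ht p)
    have := (div_le_iff₀ (hm p)).mp h2
    linarith
  -- facts about lowerLeg sets
  have hSne : ∀ t : ℝ,
      ((fun s => assocFun (mSeq M) (1 / s) + t * s) '' Ioi 0).Nonempty :=
    fun t => ⟨_, ⟨1, Set.mem_Ioi.mpr one_pos, rfl⟩⟩
  have hSlb : ∀ t : ℝ, 0 < t → ∀ x ∈ ((fun s => assocFun (mSeq M) (1 / s) + t * s) '' Ioi 0),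
      (0 : ℝ) ≤ x := by
    rintro t ht x ⟨s, hs, rfl⟩
    have h1 := hω0 (1 / s)
    have h2 : 0 < t * s := mul_pos ht hs
    simp only; linarith
  have hstar_le : ∀ t s : ℝ, 0 < t → 0 < s →
      lowerLeg (fun s => assocFun (mSeq M) (1 / s)) t ≤ assocFun (mSeq M) (1 / s) + t * s :=
    fun t s ht hs => csInf_le ⟨0, fun x hx => hSlb t ht x hx⟩ ⟨s, hs, rfl⟩
  -- per-p facts about L
  have hLbdd : ∀ p : ℕ,
      BddAbove ((fun t => t ^ p / Real.exp (assocFun (mSeq M) t)) '' Ioi 0) := by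
    intro p
    refine ⟨mSeq M p, ?_⟩
    rintro x ⟨u, hu, rfl⟩
    have := hωexp u hu p
    rw [div_le_iff₀ (Real.exp_pos _)]
    linarith
  have hLmem : ∀ p : ℕ, ∀ u : ℝ, 0 < u →
      u ^ p / Real.exp (assocFun (mSeq M) u) ≤ logConvexReg (mSeq M) p :=
    fun p u hu => le_csSup (hLbdd p) ⟨u, hu, rfl⟩
  have hLpos : ∀ p : ℕ, 0 < logConvexReg (mSeq M) p :=
    fun p => lt_of_lt_of_le (by positivity) (hLmem p 1 one_pos)
  -- upper bound for NSeq elements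
  have hNub : ∀ p : ℕ, ∀ t : ℝ, 0 < t →
      t ^ p / Real.exp (lowerLeg (fun s => assocFun (mSeq M) (1 / s)) t) ≤
        (p : ℝ) ^ p / Real.exp p * logConvexReg (mSeq M) p := by
    intro p t ht
    have hcl : 0 < (p : ℝ) ^ p / Real.exp p * logConvexReg (mSeq M) p :=
      mul_pos (aux_cseq_pos p) (hLpos p)
    have hlow : Real.log (t ^ p / ((p : ℝ) ^ p / Real.exp p * logConvexReg (mSeq M) p)) ≤
        lowerLeg (fun s => assocFun (mSeq M) (1 / s)) t := by
      apply le_csInf (hSne t)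
      rintro x ⟨s, hs, rfl⟩
      simp only
      have hA1 : -((p : ℝ) * Real.log s) - Real.log (logConvexReg (mSeq M) p) ≤
          assocFun (mSeq M) (1 / s) := by
        have h1 : ((1 / s : ℝ)) ^ p / Real.exp (assocFun (mSeq M) (1 / s)) ≤
            logConvexReg (mSeq M) p := hLmem p (1 / s) (one_div_pos.mpr hs)
        rw [div_le_iff₀ (Real.exp_pos _)] at h1
        have h3 := Real.log_le_log (pow_pos (one_div_pos.mpr hs) p) h1
        rw [Real.log_pow, Real.log_mul (ne_of_gt (hLpos p)) (Real.exp_ne_zero _),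
          Real.log_exp, Real.log_div one_ne_zero hs.ne', Real.log_one] at h3
        linarith
      have hA2 := aux_key p (mul_pos ht hs)
      rw [Real.log_mul ht.ne' hs.ne'] at hA2
      rw [Real.log_div (by positivity) hcl.ne', Real.log_pow,
        Real.log_mul (aux_cseq_pos p).ne' (hLpos p).ne', aux_log_cseq p]
      linarith
    have h4 : t ^ p / ((p : ℝ) ^ p / Real.exp p * logConvexReg (mSeq M) p) ≤
        Real.exp (lowerLeg (fun s => assocFun (mSeq M) (1 / s)) t) := by
      calc t ^ p / ((p : ℝ) ^ p / Real.exp p * logConvexReg (mSeq M) p)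
          = Real.exp (Real.log (t ^ p / ((p : ℝ) ^ p / Real.exp p * logConvexReg (mSeq M) p))) :=
            (Real.exp_log (by positivity)).symm
        _ ≤ _ := Real.exp_le_exp.mpr hlow
    rw [div_le_iff₀ (Real.exp_pos _)]
    have := (div_le_iff₀ hcl).mp h4
    linarith
  have hNbdd : ∀ p : ℕ,
      BddAbove ((fun t => t ^ p /
        Real.exp (lowerLeg (fun s => assocFun (mSeq M) (1 / s)) t)) '' Ioi 0) := by
    intro p
    exact ⟨_, by rintro x ⟨t, ht, rfl⟩; exact hNub p t ht⟩
  -- lower bound: c p * (u^p / exp (ω u)) ≤ NSeq M p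
  have hNge : ∀ p : ℕ, ∀ u : ℝ, 0 < u →
      (p : ℝ) ^ p / Real.exp p * (u ^ p / Real.exp (assocFun (mSeq M) u)) ≤ NSeq M p := by
    intro p u hu
    have hkey : ∀ δ : ℝ, 0 < δ →
        (p : ℝ) ^ p / Real.exp p * (u ^ p / Real.exp (assocFun (mSeq M) u)) * Real.exp (-δ) ≤
          NSeq M p := by
      intro δ hδ
      have ht : 0 < ((p : ℝ) + δ) * u := by positivity
      have h6 : (((p : ℝ) + δ) * u) ^ p /
          Real.exp (lowerLeg (fun s => assocFun (mSeq M) (1 / s)) (((p : ℝ) + δ) * u)) ≤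
            NSeq M p := le_csSup (hNbdd p) ⟨((p : ℝ) + δ) * u, ht, rfl⟩
      have hst := hstar_le (((p : ℝ) + δ) * u) (1 / u) ht (by positivity)
      rw [one_div_one_div] at hst
      have htu : (((p : ℝ) + δ) * u) * (1 / u) = (p : ℝ) + δ := by field_simp
      rw [htu] at hst
      refine le_trans ?_ h6
      have hexp : Real.exp (lowerLeg (fun s => assocFun (mSeq M) (1 / s)) (((p : ℝ) + δ) * u)) ≤
          Real.exp (assocFun (mSeq M) u) * Real.exp ((p : ℝ) + δ) := by
        rw [← Real.exp_add]; exact Real.exp_le_exp.mpr hst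
      have hpow : (p : ℝ) ^ p * u ^ p ≤ (((p : ℝ) + δ) * u) ^ p := by
        rw [mul_pow]
        exact mul_le_mul_of_nonneg_right
          (pow_le_pow_left₀ (Nat.cast_nonneg p) (by linarith) p) (pow_nonneg hu.le p)
      calc (p : ℝ) ^ p / Real.exp p * (u ^ p / Real.exp (assocFun (mSeq M) u)) * Real.exp (-δ)
          = ((p : ℝ) ^ p * u ^ p) / (Real.exp (assocFun (mSeq M) u) * Real.exp ((p : ℝ) + δ)) := by
            rw [Real.exp_add, Real.exp_neg]
            field_simp
        _ ≤ ((((p : ℝ) + δ) * u) ^ p) /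
              (Real.exp (assocFun (mSeq M) u) * Real.exp ((p : ℝ) + δ)) := by
            gcongr
        _ ≤ (((p : ℝ) + δ) * u) ^ p /
              Real.exp (lowerLeg (fun s => assocFun (mSeq M) (1 / s)) (((p : ℝ) + δ) * u)) := by
            gcongr

    have h7 : Tendsto (fun δ : ℝ =>
        (p : ℝ) ^ p / Real.exp p * (u ^ p / Real.exp (assocFun (mSeq M) u)) * Real.exp (-δ))
        (𝓝[>] (0 : ℝ))
        (𝓝 ((p : ℝ) ^ p / Real.exp p * (u ^ p / Real.exp (assocFun (mSeq M) u)))) := by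
      apply Tendsto.mono_left ?_ nhdsWithin_le_nhds
      have hc : Continuous fun δ : ℝ =>
          (p : ℝ) ^ p / Real.exp p * (u ^ p / Real.exp (assocFun (mSeq M) u)) * Real.exp (-δ) := by
        continuity
      simpa using hc.tendsto 0
    exact le_of_tendsto h7 (eventually_mem_nhdsWithin.mono fun δ hδ => hkey δ hδ)
  -- key identity
  have key : ∀ p : ℕ, NSeq M p = (p : ℝ) ^ p / Real.exp p * logConvexReg (mSeq M) p := by
    intro p
    apply le_antisymm
    · exact Real.sSup_le (by rintro x ⟨t, ht, rfl⟩; exact hNub p t ht)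
        (mul_pos (aux_cseq_pos p) (hLpos p)).le
    · have hNnn : 0 ≤ NSeq M p :=
        Real.sSup_nonneg (by rintro x ⟨t, ht, rfl⟩; exact div_nonneg (pow_nonneg (le_of_lt ht) p) (Real.exp_pos _).le)
      have hLle : logConvexReg (mSeq M) p ≤ NSeq M p / ((p : ℝ) ^ p / Real.exp p) := by
        apply Real.sSup_le
        · rintro x ⟨u, hu, rfl⟩
          rw [le_div_iff₀ (aux_cseq_pos p)]
          calc (fun t => t ^ p / Real.exp (assocFun (mSeq M) t)) u * ((p : ℝ) ^ p / Real.exp p)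
              = (p : ℝ) ^ p / Real.exp p * (u ^ p / Real.exp (assocFun (mSeq M) u)) := by ring
            _ ≤ NSeq M p := hNge p u hu
        · positivity
      calc (p : ℝ) ^ p / Real.exp p * logConvexReg (mSeq M) p
          ≤ (p : ℝ) ^ p / Real.exp p * (NSeq M p / ((p : ℝ) ^ p / Real.exp p)) :=
            mul_le_mul_of_nonneg_left hLle (aux_cseq_pos p).le
        _ = NSeq M p := by field_simp
  refine ⟨key, Real.exp 1, by linarith [Real.add_one_le_exp (1 : ℝ)], fun p => ?_⟩
  have hfp : (0 : ℝ) < (Nat.factorial p : ℝ) := by exact_mod_cast Nat.factorial_pos p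
  have hexp1p : Real.exp 1 ^ p = Real.exp p := by
    rw [← Real.exp_nat_mul]; norm_num
  constructor
  · rw [key p]
    have h1 : (p : ℝ) ^ p / Real.exp p ≤ (Nat.factorial p : ℝ) := by
      rw [div_le_iff₀ (Real.exp_pos _)]
      linarith [aux_pow_le_exp_mul_factorial p]
    have h2 : (Nat.factorial p : ℝ) ≤ Real.exp 1 ^ p * (Nat.factorial p : ℝ) := by
      have hone : (1 : ℝ) ≤ Real.exp 1 := by linarith [Real.add_one_le_exp (1 : ℝ)]
      have h2' : (1 : ℝ) ^ p ≤ Real.exp 1 ^ p := pow_le_pow_left₀ (by norm_num) hone p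
      rw [one_pow] at h2'
      exact le_mul_of_one_le_left hfp.le h2'
    calc (p : ℝ) ^ p / Real.exp p * logConvexReg (mSeq M) p
        ≤ (Nat.factorial p : ℝ) * logConvexReg (mSeq M) p :=
          mul_le_mul_of_nonneg_right h1 (hLpos p).le
      _ ≤ Real.exp 1 ^ p * ((Nat.factorial p : ℝ) * logConvexReg (mSeq M) p) := by
          rw [← mul_assoc]
          exact mul_le_mul_of_nonneg_right h2 (hLpos p).le
  · rw [key p, ← mul_assoc, hexp1p]
    have h3 : (Nat.factorial p : ℝ) ≤ Real.exp p * ((p : ℝ) ^ p / Real.exp p) := by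
      rw [mul_div_cancel₀ _ (Real.exp_ne_zero _)]
      exact_mod_cast Nat.factorial_le_pow p
    exact mul_le_mul_of_nonneg_right h3 (hLpos p).le
end
end

section
/- Let M=(M_p)_{p∈ℕ} be a sequence with M₀=1 such that m=(M_p/p!)_p is normalized (m₀=1≤m₁), log-convex, and satisfies lim_{p→∞} m_p^{1/p} = ∞. Then for all x ≥ μ₁ := M₁/M₀ one has ω_M(x) ≤ (ω_m^ι)_⋆(x) ≤ 1 + ω_M(ex), where (ω_m^ι)_⋆ is the lower Legendre conjugate of t ↦ ω_m(1/t). In particular, ω_M is equivalent to the concave weight function (ω_m^ι)_⋆, and for any sequence Q equivalent to M, ω_Q is equivalent to (ω_m^ι)_⋆. -/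
open Filter MeasureTheory Set Asymptotics Topology

noncomputable section

namespace Stmt9


variable {M : ℕ → ℝ}

def lam (M : ℕ → ℝ) (p : ℕ) : ℝ := mSeq M (p + 1) / mSeq M p

def mu (M : ℕ → ℝ) (p : ℕ) : ℝ := M (p + 1) / M p

lemma mpos (hpos : ∀ p, 0 < M p) (p : ℕ) : 0 < mSeq M p :=
  div_pos (hpos p) (by exact_mod_cast Nat.factorial_pos p)

lemma lam_pos (hpos : ∀ p, 0 < M p) (p : ℕ) : 0 < lam M p :=
  div_pos (mpos hpos _) (mpos hpos _)

lemma mu_pos (hpos : ∀ p, 0 < M p) (p : ℕ) : 0 < mu M p :=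
  div_pos (hpos _) (hpos _)

lemma lam_mono (hpos : ∀ p, 0 < M p)
    (hlc : ∀ j : ℕ, mSeq M (j + 1) ^ 2 ≤ mSeq M j * mSeq M (j + 2)) :
    Monotone (lam M) := by
  apply monotone_nat_of_le_succ
  intro j
  have h := hlc j
  have h1 := mpos hpos j
  have h2 := mpos hpos (j + 1)
  have h3 := mpos hpos (j + 2)
  rw [lam, lam, div_le_div_iff₀ h1 h2]
  nlinarith [h]

lemma m_zero (hM0 : M 0 = 1) : mSeq M 0 = 1 := by simp [mSeq, hM0]

lemma lam_zero (hM0 : M 0 = 1) : lam M 0 = M 1 := by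
  simp [lam, mSeq, hM0, Nat.factorial]

lemma one_le_lam (hpos : ∀ p, 0 < M p) (hM0 : M 0 = 1) (hM1 : 1 ≤ M 1)
    (hlc : ∀ j : ℕ, mSeq M (j + 1) ^ 2 ≤ mSeq M j * mSeq M (j + 2)) (p : ℕ) :
    1 ≤ lam M p :=
  le_trans (by rw [lam_zero hM0]; exact hM1) (lam_mono hpos hlc (Nat.zero_le p))

lemma m_prod (hpos : ∀ p, 0 < M p) (hM0 : M 0 = 1) (p : ℕ) :
    mSeq M p = ∏ j ∈ Finset.range p, lam M j := by
  induction p with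
  | zero => simpa using m_zero hM0
  | succ p ih =>
    rw [Finset.prod_range_succ, ← ih, lam, mul_comm,
      div_mul_cancel₀ _ (ne_of_gt (mpos hpos p))]

lemma mu_eq (hpos : ∀ p, 0 < M p) (p : ℕ) : mu M p = ((p : ℝ) + 1) * lam M p := by
  have h1 : (M p) ≠ 0 := ne_of_gt (hpos p)
  have h2 : ((Nat.factorial p : ℝ)) ≠ 0 := by
    exact_mod_cast Nat.factorial_ne_zero p
  rw [mu, lam, mSeq, mSeq, Nat.factorial_succ]
  push_cast
  field_simp

lemma mu_zero (hM0 : M 0 = 1) : mu M 0 = M 1 := by simp [mu, hM0]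

lemma mu_mono (hpos : ∀ p, 0 < M p)
    (hlc : ∀ j : ℕ, mSeq M (j + 1) ^ 2 ≤ mSeq M j * mSeq M (j + 2)) :
    Monotone (mu M) := by
  apply monotone_nat_of_le_succ
  intro j
  rw [mu_eq hpos, mu_eq hpos]
  have h1 := lam_mono hpos hlc (Nat.le_succ j)
  have h2 := lam_pos hpos j
  push_cast
  nlinarith [h1, h2]

lemma M_prod (hpos : ∀ p, 0 < M p) (hM0 : M 0 = 1) (p : ℕ) :
    M p = ∏ j ∈ Finset.range p, mu M j := by
  induction p with
  | zero => simpa using hM0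
  | succ p ih =>
    rw [Finset.prod_range_succ, ← ih, mu, mul_comm,
      div_mul_cancel₀ _ (ne_of_gt (hpos p))]

lemma lam_tendsto (hpos : ∀ p, 0 < M p) (hM0 : M 0 = 1)
    (hlc : ∀ j : ℕ, mSeq M (j + 1) ^ 2 ≤ mSeq M j * mSeq M (j + 2))
    (hlim : Tendsto (fun p : ℕ => mSeq M p ^ (1 / (p : ℝ))) atTop atTop) :
    Tendsto (lam M) atTop atTop := by
  apply tendsto_atTop_mono' atTop ?_ hlim
  filter_upwards [eventually_ge_atTop 1] with p hp
  have hp0 : (p : ℝ) ≠ 0 := by exact_mod_cast Nat.one_le_iff_ne_zero.1 hp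
  have h1 : mSeq M p ≤ lam M p ^ p := by
    rw [m_prod hpos hM0]
    calc ∏ j ∈ Finset.range p, lam M j
        ≤ ∏ _j ∈ Finset.range p, lam M p := by
          apply Finset.prod_le_prod (fun j _ => (lam_pos hpos j).le)
          intro j hj
          exact lam_mono hpos hlc (le_of_lt (Finset.mem_range.1 hj))
      _ = lam M p ^ p := by rw [Finset.prod_const, Finset.card_range]
  calc mSeq M p ^ (1 / (p : ℝ))
      ≤ (lam M p ^ p) ^ (1 / (p : ℝ)) :=
        Real.rpow_le_rpow (mpos hpos p).le h1 (by positivity)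
    _ = lam M p := by
        rw [← Real.rpow_natCast (lam M p) p, ← Real.rpow_mul (lam_pos hpos p).le,
          mul_one_div, div_self hp0, Real.rpow_one]

lemma mu_tendsto (hpos : ∀ p, 0 < M p) (hM0 : M 0 = 1)
    (hlc : ∀ j : ℕ, mSeq M (j + 1) ^ 2 ≤ mSeq M j * mSeq M (j + 2))
    (hlim : Tendsto (fun p : ℕ => mSeq M p ^ (1 / (p : ℝ))) atTop atTop) :
    Tendsto (mu M) atTop atTop := by
  apply tendsto_atTop_mono ?_ (lam_tendsto hpos hM0 hlc hlim)
  intro p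
  rw [mu_eq hpos]
  nlinarith [lam_pos hpos p, (Nat.cast_nonneg p : (0:ℝ) ≤ p)]


lemma ratio_bdd (hpos : ∀ p, 0 < M p) (hM0 : M 0 = 1)
    (hlc : ∀ j : ℕ, mSeq M (j + 1) ^ 2 ≤ mSeq M j * mSeq M (j + 2))
    (hlim : Tendsto (fun p : ℕ => mSeq M p ^ (1 / (p : ℝ))) atTop atTop)
    {t : ℝ} (ht : 0 < t) :
    ∃ B : ℝ, ∀ p : ℕ, t ^ p / mSeq M p ≤ B := by
  obtain ⟨J, hJ⟩ := eventually_atTop.1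
    ((lam_tendsto hpos hM0 hlc hlim).eventually_ge_atTop t)
  set u : ℕ → ℝ := fun p => t ^ p / mSeq M p with hu
  have hupos : ∀ p, 0 < u p := fun p => div_pos (by positivity) (mpos hpos p)
  have hstep : ∀ j, J ≤ j → u (j + 1) ≤ u j := by
    intro j hj
    have hl : t ≤ lam M j := hJ j hj
    have hlp := lam_pos hpos j
    have heq : u (j + 1) = u j * (t / lam M j) := by
      have h1 := (mpos hpos j).ne'
      have h2 := (mpos hpos (j + 1)).ne'
      simp only [hu, lam]
      field_simp
      ring
    rw [heq]
    nlinarith [hupos j, div_le_one_of_le₀ hl hlp.le, div_pos ht hlp]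
  have hJmax : ∀ k, u (J + k) ≤ u J := by
    intro k
    induction k with
    | zero => simp
    | succ k ih => exact le_trans (hstep (J + k) (Nat.le_add_right _ _)) ih
  refine ⟨∑ p ∈ Finset.range (J + 1), u p, fun p => ?_⟩
  have hsum : ∀ q ∈ Finset.range (J + 1), u q ≤ ∑ p ∈ Finset.range (J + 1), u p :=
    fun q hq => Finset.single_le_sum (fun i _ => (hupos i).le) hq
  rcases le_or_gt p J with hp | hp
  · exact hsum p (Finset.mem_range.2 (by omega))
  · obtain ⟨k, rfl⟩ := Nat.exists_eq_add_of_le (le_of_lt hp)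
    exact le_trans (hJmax k) (hsum J (Finset.mem_range.2 (by omega)))

lemma assoc_le {f : ℕ → ℝ} {t c : ℝ} (ht : 0 < t)
    (h : ∀ p : ℕ, Real.log (t ^ p / f p) ≤ c) : assocFun f t ≤ c := by
  rw [assocFun, if_neg (not_le.2 ht)]
  exact csSup_le (Set.range_nonempty _) (by rintro b ⟨p, rfl⟩; exact h p)

lemma le_assoc {f : ℕ → ℝ} {t : ℝ} (ht : 0 < t)
    (hb : BddAbove (Set.range fun p : ℕ => Real.log (t ^ p / f p))) (p : ℕ) :
    Real.log (t ^ p / f p) ≤ assocFun f t := by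
  rw [assocFun, if_neg (not_le.2 ht)]
  exact le_csSup hb ⟨p, rfl⟩

lemma assoc_bdd (hpos : ∀ p, 0 < M p) (hM0 : M 0 = 1)
    (hlc : ∀ j : ℕ, mSeq M (j + 1) ^ 2 ≤ mSeq M j * mSeq M (j + 2))
    (hlim : Tendsto (fun p : ℕ => mSeq M p ^ (1 / (p : ℝ))) atTop atTop)
    {f : ℕ → ℝ} (hf : ∀ p, 0 < f p) {C : ℝ} (hC : 1 ≤ C)
    (hcf : ∀ p, mSeq M p ≤ C ^ p * f p) {t : ℝ} (ht : 0 < t) :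
    BddAbove (Set.range fun p : ℕ => Real.log (t ^ p / f p)) := by
  have hC0 : 0 < C := lt_of_lt_of_le one_pos hC
  obtain ⟨B, hB⟩ := ratio_bdd hpos hM0 hlc hlim (mul_pos hC0 ht)
  refine ⟨Real.log B, ?_⟩
  rintro b ⟨p, rfl⟩
  have h1 : t ^ p / f p ≤ (C * t) ^ p / mSeq M p := by
    rw [div_le_div_iff₀ (hf p) (mpos hpos p), mul_pow]
    calc t ^ p * mSeq M p ≤ t ^ p * (C ^ p * f p) := by
          exact mul_le_mul_of_nonneg_left (hcf p) (by positivity)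
      _ = C ^ p * t ^ p * f p := by ring
  have h2 : (0:ℝ) < t ^ p / f p := div_pos (by positivity) (hf p)
  exact Real.log_le_log h2 (h1.trans (hB p))

lemma assoc_nonpos_eq_zero {f : ℕ → ℝ} {t : ℝ} (ht : t ≤ 0) : assocFun f t = 0 := by
  rw [assocFun, if_pos ht]

lemma assoc_nonneg {f : ℕ → ℝ} {t : ℝ}
    (hb : 0 < t → BddAbove (Set.range fun p : ℕ => Real.log (t ^ p / f p)))
    (hf0 : f 0 = 1) : 0 ≤ assocFun f t := by
  rcases le_or_gt t 0 with h | h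
  · rw [assoc_nonpos_eq_zero h]
  · have := le_assoc h (hb h) 0
    simpa [hf0] using this


section Main
variable (hpos : ∀ p, 0 < M p) (hM0 : M 0 = 1) (hM1 : 1 ≤ M 1)
  (hlc : ∀ j : ℕ, mSeq M (j + 1) ^ 2 ≤ mSeq M j * mSeq M (j + 2))
  (hlim : Tendsto (fun p : ℕ => mSeq M p ^ (1 / (p : ℝ))) atTop atTop)

include hpos hM0 hlc hlim

lemma bddm {t : ℝ} (ht : 0 < t) :
    BddAbove (Set.range fun p : ℕ => Real.log (t ^ p / mSeq M p)) :=
  assoc_bdd hpos hM0 hlc hlim (mpos hpos) le_rfl (fun p => by simp) ht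

lemma bddM {t : ℝ} (ht : 0 < t) :
    BddAbove (Set.range fun p : ℕ => Real.log (t ^ p / M p)) := by
  apply assoc_bdd hpos hM0 hlc hlim hpos le_rfl (fun p => ?_) ht
  rw [one_pow, one_mul, mSeq]
  exact div_le_self (hpos p).le (by exact_mod_cast Nat.factorial_pos p)

lemma hm_nonneg (s : ℝ) : 0 ≤ assocFun (mSeq M) (1 / s) :=
  assoc_nonneg (fun h => bddm hpos hM0 hlc hlim h) (m_zero hM0)

lemma leg_nonempty (x : ℝ) :
    ((fun s => assocFun (mSeq M) (1 / s) + x * s) '' Ioi 0).Nonempty :=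
  Set.Nonempty.image _ ⟨1, mem_Ioi.2 one_pos⟩

lemma leg_bddBelow {x : ℝ} (hx : 0 ≤ x) :
    BddBelow ((fun s => assocFun (mSeq M) (1 / s) + x * s) '' Ioi 0) := by
  refine ⟨0, ?_⟩
  rintro b ⟨s, hs, rfl⟩
  have h1 := hm_nonneg hpos hM0 hlc hlim (M := M) s
  have h2 : 0 ≤ x * s := mul_nonneg hx (le_of_lt hs)
  simp only []
  linarith

lemma leg_nonneg {x : ℝ} (hx : 0 ≤ x) :
    0 ≤ lowerLeg (fun s => assocFun (mSeq M) (1 / s)) x := by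
  apply le_csInf (leg_nonempty hpos hM0 hlc hlim x)
  rintro b ⟨s, hs, rfl⟩
  have h1 := hm_nonneg hpos hM0 hlc hlim (M := M) s
  have h2 : 0 ≤ x * s := mul_nonneg hx (le_of_lt hs)
  simp only []
  linarith

include hM1 in
lemma h_zero_of_one_le {s : ℝ} (hs : 1 ≤ s) : assocFun (mSeq M) (1 / s) = 0 := by
  have hs0 : 0 < s := lt_of_lt_of_le one_pos hs
  have h1s : 0 < 1 / s := by positivity
  refine le_antisymm (assoc_le h1s fun p => ?_) (hm_nonneg hpos hM0 hlc hlim s)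
  have hd : (0:ℝ) < (1 / s) ^ p / mSeq M p := div_pos (by positivity) (mpos hpos p)
  apply Real.log_nonpos hd.le
  rw [div_le_one (mpos hpos p)]
  calc (1 / s) ^ p ≤ 1 := pow_le_one₀ (le_of_lt h1s) ((div_le_one hs0).2 hs)
    _ = ∏ _j ∈ Finset.range p, (1:ℝ) := by simp
    _ ≤ mSeq M p := by
        rw [m_prod hpos hM0]
        exact Finset.prod_le_prod (fun j _ => one_pos.le)
          (fun j _ => one_le_lam hpos hM0 hM1 hlc j)

include hM1 in
lemma leg_zero : lowerLeg (fun s => assocFun (mSeq M) (1 / s)) 0 = 0 := by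
  apply le_antisymm
  · apply csInf_le (leg_bddBelow hpos hM0 hlc hlim le_rfl)
    refine ⟨1, mem_Ioi.2 one_pos, ?_⟩
    have h0 := h_zero_of_one_le hpos hM0 hM1 hlc hlim (le_refl (1:ℝ))
    simpa using h0
  · exact leg_nonneg hpos hM0 hlc hlim le_rfl

lemma leg_mono {x y : ℝ} (hx : 0 ≤ x) (hxy : x ≤ y) :
    lowerLeg (fun s => assocFun (mSeq M) (1 / s)) x ≤
      lowerLeg (fun s => assocFun (mSeq M) (1 / s)) y := by
  apply le_csInf (leg_nonempty hpos hM0 hlc hlim y)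
  rintro b ⟨s, hs, rfl⟩
  calc lowerLeg (fun s => assocFun (mSeq M) (1 / s)) x
      ≤ assocFun (mSeq M) (1 / s) + x * s :=
        csInf_le (leg_bddBelow hpos hM0 hlc hlim hx) ⟨s, hs, rfl⟩
    _ ≤ assocFun (mSeq M) (1 / s) + y * s := by
        have := mul_le_mul_of_nonneg_right hxy (le_of_lt hs)
        linarith

include hM1 in
lemma leg_lip {x y : ℝ} (hx : 0 ≤ x) (hxy : x ≤ y) :
    lowerLeg (fun s => assocFun (mSeq M) (1 / s)) y ≤
      lowerLeg (fun s => assocFun (mSeq M) (1 / s)) x + (y - x) := by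
  set L := lowerLeg (fun s => assocFun (mSeq M) (1 / s)) with hL
  have hy : 0 ≤ y := le_trans hx hxy
  have h1 : L y - (y - x) ≤ L x := by
    apply le_csInf (leg_nonempty hpos hM0 hlc hlim x)
    rintro b ⟨s, hs, rfl⟩
    have hs0 : (0:ℝ) < s := hs
    rcases le_or_gt s 1 with hs1 | hs1
    · have h2 : L y ≤ assocFun (mSeq M) (1 / s) + y * s :=
        csInf_le (leg_bddBelow hpos hM0 hlc hlim hy) ⟨s, hs, rfl⟩
      have h3 : (y - x) * s ≤ (y - x) := by nlinarith
      simp only []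
      nlinarith
    · have hz : assocFun (mSeq M) (1 / s) = 0 :=
        h_zero_of_one_le hpos hM0 hM1 hlc hlim (le_of_lt hs1)
      have hLy : L y ≤ y := by
        have h2 : L y ≤ assocFun (mSeq M) (1 / 1) + y * 1 :=
          csInf_le (leg_bddBelow hpos hM0 hlc hlim hy) ⟨1, mem_Ioi.2 one_pos, rfl⟩
        rw [h_zero_of_one_le hpos hM0 hM1 hlc hlim le_rfl] at h2
        linarith
      have hb : x ≤ x * s := le_mul_of_one_le_right hx (le_of_lt hs1)
      simp only [hz]
      linarith
  linarith

lemma leg_concave : ConcaveOn ℝ (Ici 0) (lowerLeg (fun s => assocFun (mSeq M) (1 / s))) := by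
  refine ⟨convex_Ici 0, ?_⟩
  intro x hx y hy a b ha hb hab
  simp only [smul_eq_mul]
  apply le_csInf (leg_nonempty hpos hM0 hlc hlim _)
  rintro c ⟨s, hs, rfl⟩
  have h1 : lowerLeg (fun s => assocFun (mSeq M) (1 / s)) x ≤
      assocFun (mSeq M) (1 / s) + x * s :=
    csInf_le (leg_bddBelow hpos hM0 hlc hlim hx) ⟨s, hs, rfl⟩
  have h2 : lowerLeg (fun s => assocFun (mSeq M) (1 / s)) y ≤
      assocFun (mSeq M) (1 / s) + y * s :=
    csInf_le (leg_bddBelow hpos hM0 hlc hlim hy) ⟨s, hs, rfl⟩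
  have h3 := add_le_add (mul_le_mul_of_nonneg_left h1 ha) (mul_le_mul_of_nonneg_left h2 hb)
  have h4 : a * (assocFun (mSeq M) (1 / s) + x * s) + b * (assocFun (mSeq M) (1 / s) + y * s)
      = (a + b) * assocFun (mSeq M) (1 / s) + (a * x + b * y) * s := by ring
  rw [h4, hab, one_mul] at h3
  simpa using h3

include hM1 in
lemma leg_scale {c x : ℝ} (hc : 1 ≤ c) (hx : 0 ≤ x) :
    lowerLeg (fun s => assocFun (mSeq M) (1 / s)) (c * x) ≤
      c * lowerLeg (fun s => assocFun (mSeq M) (1 / s)) x := by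
  set L := lowerLeg (fun s => assocFun (mSeq M) (1 / s)) with hLdef
  have hc0 : 0 < c := lt_of_lt_of_le one_pos hc
  have hmem1 : c * x ∈ Ici (0:ℝ) := by
    simp only [mem_Ici]; positivity
  have hmem2 : (0:ℝ) ∈ Ici (0:ℝ) := mem_Ici.2 le_rfl
  have ha : (0:ℝ) ≤ 1 / c := by positivity
  have hb : (0:ℝ) ≤ 1 - 1 / c := by
    rw [sub_nonneg]
    exact (div_le_one hc0).2 hc
  have hab : 1 / c + (1 - 1 / c) = 1 := by ring
  have key := (leg_concave hpos hM0 hlc hlim).2 hmem1 hmem2 ha hb hab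
  simp only [smul_eq_mul, mul_zero, add_zero] at key
  have harg : 1 / c * (c * x) = x := by field_simp
  rw [harg, leg_zero hpos hM0 hM1 hlc hlim, mul_zero, add_zero] at key
  calc L (c * x) = c * (1 / c * L (c * x)) := by field_simp
    _ ≤ c * L x := mul_le_mul_of_nonneg_left key hc0.le

include hM1 in
lemma key_lower {x : ℝ} (hx : M 1 ≤ x) :
    assocFun M x ≤ lowerLeg (fun s => assocFun (mSeq M) (1 / s)) x := by
  have hx0 : 0 < x := lt_of_lt_of_le (lt_of_lt_of_le one_pos hM1) hx
  apply le_csInf (leg_nonempty hpos hM0 hlc hlim x)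
  rintro b ⟨s, hs, rfl⟩
  have hs0 : (0:ℝ) < s := hs
  apply assoc_le hx0
  intro p
  have hfac : (0:ℝ) < (Nat.factorial p : ℝ) := by exact_mod_cast Nat.factorial_pos p
  have hmul : x ^ p / M p
      = ((1 / s) ^ p / mSeq M p) * ((x * s) ^ p / (Nat.factorial p : ℝ)) := by
    rw [mSeq]
    have hMp := (hpos p).ne'
    field_simp
    rw [← mul_pow, ← mul_assoc, one_div_mul_cancel hs0.ne', one_mul]
  rw [hmul, Real.log_mul
    (ne_of_gt (div_pos (by positivity) (mpos hpos p)))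
    (ne_of_gt (div_pos (by positivity) hfac))]
  have h2 : Real.log ((1 / s) ^ p / mSeq M p) ≤ assocFun (mSeq M) (1 / s) :=
    le_assoc (by positivity) (bddm hpos hM0 hlc hlim (by positivity)) p
  have h3 : Real.log ((x * s) ^ p / (Nat.factorial p : ℝ)) ≤ x * s := by
    have hb := Real.pow_div_factorial_le_exp (x * s) (mul_nonneg hx0.le hs0.le) p
    calc Real.log ((x * s) ^ p / (Nat.factorial p : ℝ))
        ≤ Real.log (Real.exp (x * s)) :=
          Real.log_le_log (div_pos (by positivity) hfac) hb
      _ = x * s := Real.log_exp _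
  simp only []
  linarith

include hM1 in
lemma key_upper {x : ℝ} (hx : M 1 ≤ x) :
    lowerLeg (fun s => assocFun (mSeq M) (1 / s)) x ≤ 1 + assocFun M (Real.exp 1 * x) := by
  classical
  have hx0 : 0 < x := lt_of_lt_of_le (lt_of_lt_of_le one_pos hM1) hx
  have hex : ∃ k, x < mu M k :=
    ((mu_tendsto hpos hM0 hlc hlim).eventually_gt_atTop x).exists
  set n := Nat.find hex with hn
  have hxn : x < mu M n := Nat.find_spec hex
  have hmem : ∀ j, j < n → mu M j ≤ x := fun j hj => not_lt.1 (Nat.find_min hex hj)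
  have hn1 : 1 ≤ n := by
    rcases Nat.eq_zero_or_pos n with h0 | h
    · exfalso
      rw [h0, mu_zero hM0] at hxn
      exact absurd hx (not_le.2 hxn)
    · exact h
  have hnpos : (0:ℝ) < (n:ℝ) := by exact_mod_cast hn1
  set t := min (x / (n:ℝ)) (lam M n) with htdef
  have hlt : 0 < lam M n := lam_pos hpos n
  have ht : 0 < t := lt_min (div_pos hx0 hnpos) hlt
  have key : ∀ p : ℕ, t ^ p / mSeq M p ≤ x ^ n / M n := by
    have hab : ∀ j, j < n → t / lam M j ≤ x / mu M j := by
      intro j hj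
      have hlj := lam_pos hpos j
      have hmj := mu_pos hpos j
      rw [div_le_div_iff₀ hlj hmj, mu_eq hpos j]
      have h1 : t ≤ x / (n:ℝ) := min_le_left _ _
      have hj1 : ((j:ℝ) + 1) ≤ (n:ℝ) := by exact_mod_cast hj
      have h2 : t * ((j:ℝ) + 1) ≤ x := by
        calc t * ((j:ℝ) + 1) ≤ (x / (n:ℝ)) * (n:ℝ) := by
              apply mul_le_mul h1 hj1 (by positivity) (by positivity)
          _ = x := div_mul_cancel₀ x (ne_of_gt hnpos)
      nlinarith
    have ha1 : ∀ j, n ≤ j → t / lam M j ≤ 1 := by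
      intro j hj
      rw [div_le_one (lam_pos hpos j)]
      exact le_trans (min_le_right _ _) (lam_mono hpos hlc hj)
    have hb1 : ∀ j, j < n → 1 ≤ x / mu M j := fun j hj =>
      (one_le_div (mu_pos hpos j)).2 (hmem j hj)
    have hprodL : ∀ p : ℕ, t ^ p / mSeq M p = ∏ j ∈ Finset.range p, (t / lam M j) := by
      intro p
      rw [Finset.prod_div_distrib, Finset.prod_const, Finset.card_range, ← m_prod hpos hM0]
    have hprodR : x ^ n / M n = ∏ j ∈ Finset.range n, (x / mu M j) := by
      rw [Finset.prod_div_distrib, Finset.prod_const, Finset.card_range, ← M_prod hpos hM0]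
    intro p
    rw [hprodL p, hprodR]
    rcases le_or_gt p n with hpn | hpn
    · calc ∏ j ∈ Finset.range p, (t / lam M j)
          ≤ ∏ j ∈ Finset.range p, (x / mu M j) := by
            apply Finset.prod_le_prod (fun j _ => (div_pos ht (lam_pos hpos j)).le)
            intro j hj
            exact hab j (lt_of_lt_of_le (Finset.mem_range.1 hj) hpn)
        _ ≤ ∏ j ∈ Finset.range n, (x / mu M j) := by
            rw [← Finset.prod_range_mul_prod_Ico _ hpn]
            apply le_mul_of_one_le_right
              (Finset.prod_nonneg fun j _ => (div_pos hx0 (mu_pos hpos j)).le)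
            calc (1:ℝ) = ∏ _j ∈ Finset.Ico p n, (1:ℝ) := by simp
              _ ≤ ∏ j ∈ Finset.Ico p n, (x / mu M j) :=
                Finset.prod_le_prod (fun j _ => one_pos.le)
                  (fun j hj => hb1 j (Finset.mem_Ico.1 hj).2)
    · rw [← Finset.prod_range_mul_prod_Ico _ (le_of_lt hpn)]
      calc (∏ j ∈ Finset.range n, (t / lam M j)) * ∏ j ∈ Finset.Ico n p, (t / lam M j)
          ≤ (∏ j ∈ Finset.range n, (x / mu M j)) * 1 := by
            apply mul_le_mul
            · apply Finset.prod_le_prod (fun j _ => (div_pos ht (lam_pos hpos j)).le)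
              intro j hj
              exact hab j (Finset.mem_range.1 hj)
            · apply Finset.prod_le_one (fun j _ => (div_pos ht (lam_pos hpos j)).le)
              intro j hj
              exact ha1 j (Finset.mem_Ico.1 hj).1
            · exact Finset.prod_nonneg (fun j _ => (div_pos ht (lam_pos hpos j)).le)
            · exact Finset.prod_nonneg (fun j _ => (div_pos hx0 (mu_pos hpos j)).le)
        _ = _ := mul_one _
  have hmemel : assocFun (mSeq M) (1 / t⁻¹) + x * t⁻¹ ∈
      ((fun s => assocFun (mSeq M) (1 / s) + x * s) '' Ioi 0) :=
    ⟨t⁻¹, mem_Ioi.2 (inv_pos.2 ht), rfl⟩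
  have hL1 : lowerLeg (fun s => assocFun (mSeq M) (1 / s)) x ≤
      assocFun (mSeq M) t + x * t⁻¹ := by
    have h := csInf_le (leg_bddBelow hpos hM0 hlc hlim hx0.le) hmemel
    rwa [one_div, inv_inv] at h
  have hxt : x * t⁻¹ ≤ (n:ℝ) + 1 := by
    rw [← div_eq_mul_inv, div_le_iff₀ ht]
    rcases min_choice (x / (n:ℝ)) (lam M n) with hmin | hmin
    · rw [htdef, hmin, ← mul_div_assoc, le_div_iff₀ hnpos]
      nlinarith
    · rw [htdef, hmin]
      have := mu_eq hpos n
      nlinarith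
  have hm_le : assocFun (mSeq M) t ≤ Real.log (x ^ n / M n) :=
    assoc_le ht fun p =>
      Real.log_le_log (div_pos (by positivity) (mpos hpos p)) (key p)
  have hfin : Real.log (x ^ n / M n) + (n:ℝ) = Real.log ((Real.exp 1 * x) ^ n / M n) := by
    rw [Real.log_div (ne_of_gt (pow_pos hx0 n)) (ne_of_gt (hpos n)),
        Real.log_div (ne_of_gt (pow_pos (by positivity) n)) (ne_of_gt (hpos n)),
        Real.log_pow, Real.log_pow,
        Real.log_mul (Real.exp_ne_zero 1) (ne_of_gt hx0), Real.log_exp]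
    push_cast
    ring
  have hlast : Real.log ((Real.exp 1 * x) ^ n / M n) ≤ assocFun M (Real.exp 1 * x) :=
    le_assoc (by positivity) (bddM hpos hM0 hlc hlim (by positivity)) n
  linarith

include hM1 in
lemma omega_lb {x : ℝ} (hx : 0 < x) :
    Real.log x - Real.log (M 1) ≤ assocFun M x := by
  have h := le_assoc hx (bddM hpos hM0 hlc hlim hx) 1
  rwa [pow_one, Real.log_div hx.ne' (hpos 1).ne'] at h

end Main
end Stmt9


/-- If `m = (M_p/p!)_p` is normalized, log-convex and `m_p^{1/p} → ∞`, then
`ω_M(x) ≤ (ω_m^ι)_⋆(x) ≤ 1 + ω_M(e x)` for `x ≥ μ₁ = M₁/M₀`; in particular `ω_M`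
is equivalent to the concave weight function `(ω_m^ι)_⋆`, and the same holds for
`ω_Q` whenever `Q` is equivalent to `M`. -/
theorem stmt9 (M : ℕ → ℝ) (hpos : ∀ p, 0 < M p) (hM0 : M 0 = 1) (hM1 : 1 ≤ M 1)
    (hlc : ∀ j : ℕ, mSeq M (j + 1) ^ 2 ≤ mSeq M j * mSeq M (j + 2))
    (hlim : Tendsto (fun p : ℕ => mSeq M p ^ (1 / (p : ℝ))) atTop atTop) :
    (∀ x : ℝ, M 1 / M 0 ≤ x →
        assocFun M x ≤ lowerLeg (fun s => assocFun (mSeq M) (1 / s)) x ∧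
        lowerLeg (fun s => assocFun (mSeq M) (1 / s)) x ≤ 1 + assocFun M (Real.exp 1 * x)) ∧
    ConcaveOn ℝ (Ici 0) (lowerLeg (fun s => assocFun (mSeq M) (1 / s))) ∧
    IsWeightFun (lowerLeg (fun s => assocFun (mSeq M) (1 / s))) ∧
    (assocFun M =O[atTop] lowerLeg (fun s => assocFun (mSeq M) (1 / s)) ∧
      lowerLeg (fun s => assocFun (mSeq M) (1 / s)) =O[atTop] assocFun M) ∧
    (∀ Q : ℕ → ℝ, (∀ p, 0 < Q p) →
      (∃ C : ℝ, 1 ≤ C ∧ ∀ p : ℕ, M p ≤ C ^ p * Q p ∧ Q p ≤ C ^ p * M p) →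
      (assocFun Q =O[atTop] lowerLeg (fun s => assocFun (mSeq M) (1 / s)) ∧
        lowerLeg (fun s => assocFun (mSeq M) (1 / s)) =O[atTop] assocFun Q)) := by
  classical
  have hM1pos : (0:ℝ) < M 1 := hpos 1
  have he1 : (1:ℝ) ≤ Real.exp 1 := Real.one_le_exp (by norm_num)
  refine ⟨?_, Stmt9.leg_concave hpos hM0 hlc hlim, ?_, ⟨?_, ?_⟩, ?_⟩
  · -- part 1
    intro x hx
    rw [hM0, div_one] at hx
    exact ⟨Stmt9.key_lower hpos hM0 hM1 hlc hlim hx,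
      Stmt9.key_upper hpos hM0 hM1 hlc hlim hx⟩
  · -- part 3 : weight function
    refine ⟨?_, ?_, Stmt9.leg_zero hpos hM0 hM1 hlc hlim, ?_⟩
    · -- continuity
      have key : ∀ x y : ℝ, 0 ≤ x → x ≤ y →
          |lowerLeg (fun s => assocFun (mSeq M) (1 / s)) x -
            lowerLeg (fun s => assocFun (mSeq M) (1 / s)) y| ≤ |x - y| := by
        intro x y hx hxy
        have h1 := Stmt9.leg_mono hpos hM0 hlc hlim hx hxy
        have h2 := Stmt9.leg_lip hpos hM0 hM1 hlc hlim hx hxy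
        rw [abs_sub_comm, abs_of_nonneg (sub_nonneg.2 h1), abs_sub_comm x y,
          abs_of_nonneg (sub_nonneg.2 hxy)]
        linarith
      have hlip : LipschitzOnWith 1 (lowerLeg (fun s => assocFun (mSeq M) (1 / s)))
          (Ici 0) := by
        rw [lipschitzOnWith_iff_dist_le_mul]
        intro x hx y hy
        rw [Real.dist_eq, Real.dist_eq, NNReal.coe_one, one_mul]
        rcases le_total x y with h | h
        · exact key x y hx h
        · rw [abs_sub_comm, abs_sub_comm x y]
          exact key y x hy h
      exact hlip.continuousOn
    · -- monotone
      intro x hx y hy hxy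
      exact Stmt9.leg_mono hpos hM0 hlc hlim hx hxy
    · -- tendsto atTop
      have hlog : Tendsto (fun x : ℝ => Real.log x - Real.log (M 1)) atTop atTop := by
        have := tendsto_atTop_add_const_right atTop (-(Real.log (M 1)))
          Real.tendsto_log_atTop
        simpa [sub_eq_add_neg] using this
      apply tendsto_atTop_mono' atTop ?_ hlog
      filter_upwards [eventually_ge_atTop (M 1)] with x hx
      have hx0 : 0 < x := lt_of_lt_of_le hM1pos hx
      exact (Stmt9.omega_lb hpos hM0 hM1 hlc hlim hx0).trans
        (Stmt9.key_lower hpos hM0 hM1 hlc hlim hx)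
  · -- part 4a
    rw [Asymptotics.isBigO_iff]
    refine ⟨1, ?_⟩
    filter_upwards [eventually_ge_atTop (M 1)] with x hx
    have hx0 : 0 < x := lt_of_lt_of_le hM1pos hx
    have h0 : 0 ≤ assocFun M x :=
      Stmt9.assoc_nonneg (fun h => Stmt9.bddM hpos hM0 hlc hlim h) hM0
    have h2 := Stmt9.key_lower hpos hM0 hM1 hlc hlim hx
    rw [Real.norm_eq_abs, Real.norm_eq_abs, one_mul, abs_of_nonneg h0,
      abs_of_nonneg (le_trans h0 h2)]
    exact h2
  · -- part 4b
    rw [Asymptotics.isBigO_iff]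
    refine ⟨2 * Real.exp 1, ?_⟩
    filter_upwards [eventually_ge_atTop (Real.exp 1 * M 1)] with x hx
    have hx0 : 0 < x := lt_of_lt_of_le (by positivity) hx
    have hxe : M 1 ≤ x / Real.exp 1 := by
      rw [le_div_iff₀ (Real.exp_pos 1)]
      nlinarith
    have hxepos : (0:ℝ) ≤ x / Real.exp 1 := by positivity
    have heq : Real.exp 1 * (x / Real.exp 1) = x := by field_simp
    have h1 : lowerLeg (fun s => assocFun (mSeq M) (1 / s)) x ≤
        Real.exp 1 * lowerLeg (fun s => assocFun (mSeq M) (1 / s)) (x / Real.exp 1) := by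
      have := Stmt9.leg_scale hpos hM0 hM1 hlc hlim he1 hxepos
      rwa [heq] at this
    have h2 : lowerLeg (fun s => assocFun (mSeq M) (1 / s)) (x / Real.exp 1) ≤
        1 + assocFun M x := by
      have := Stmt9.key_upper hpos hM0 hM1 hlc hlim hxe
      rwa [heq] at this
    have h3 : 1 ≤ assocFun M x := by
      have h4 := Stmt9.omega_lb hpos hM0 hM1 hlc hlim hx0
      have h5 : Real.log (Real.exp 1 * M 1) ≤ Real.log x :=
        Real.log_le_log (by positivity) hx
      rw [Real.log_mul (Real.exp_ne_zero 1) hM1pos.ne', Real.log_exp] at h5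
      linarith
    have h6 : 0 ≤ lowerLeg (fun s => assocFun (mSeq M) (1 / s)) x :=
      Stmt9.leg_nonneg hpos hM0 hlc hlim hx0.le
    rw [Real.norm_eq_abs, Real.norm_eq_abs, abs_of_nonneg h6,
      abs_of_nonneg (by linarith : (0:ℝ) ≤ assocFun M x)]
    nlinarith [mul_le_mul_of_nonneg_left h2 (Real.exp_pos 1).le,
      mul_nonneg (Real.exp_pos 1).le (sub_nonneg.2 h3)]
  · -- part 5
    rintro Q hQpos ⟨C, hC1, hCQ⟩
    have hC0 : 0 < C := lt_of_lt_of_le one_pos hC1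
    have hQ0 : Q 0 = 1 := by
      have h1 := (hCQ 0).1
      have h2 := (hCQ 0).2
      rw [pow_zero, one_mul, hM0] at h1 h2
      linarith
    have bddQ : ∀ t : ℝ, 0 < t →
        BddAbove (Set.range fun p : ℕ => Real.log (t ^ p / Q p)) := by
      intro t ht
      apply Stmt9.assoc_bdd hpos hM0 hlc hlim hQpos hC1 (fun p => ?_) ht
      calc mSeq M p ≤ M p :=
            div_le_self (hpos p).le (by exact_mod_cast Nat.factorial_pos p)
        _ ≤ C ^ p * Q p := (hCQ p).1
    have hQM : ∀ t : ℝ, 0 < t → assocFun Q t ≤ assocFun M (C * t) := by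
      intro t ht
      apply Stmt9.assoc_le ht
      intro p
      have h1 : t ^ p / Q p ≤ (C * t) ^ p / M p := by
        rw [div_le_div_iff₀ (hQpos p) (hpos p), mul_pow]
        calc t ^ p * M p ≤ t ^ p * (C ^ p * Q p) :=
              mul_le_mul_of_nonneg_left (hCQ p).1 (by positivity)
          _ = C ^ p * t ^ p * Q p := by ring
      exact (Real.log_le_log (div_pos (by positivity) (hQpos p)) h1).trans
        (Stmt9.le_assoc (by positivity) (Stmt9.bddM hpos hM0 hlc hlim (by positivity)) p)
    have hMQ : ∀ t : ℝ, 0 < t → assocFun M t ≤ assocFun Q (C * t) := by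
      intro t ht
      apply Stmt9.assoc_le ht
      intro p
      have h1 : t ^ p / M p ≤ (C * t) ^ p / Q p := by
        rw [div_le_div_iff₀ (hpos p) (hQpos p), mul_pow]
        calc t ^ p * Q p ≤ t ^ p * (C ^ p * M p) :=
              mul_le_mul_of_nonneg_left (hCQ p).2 (by positivity)
          _ = C ^ p * t ^ p * M p := by ring
      exact (Real.log_le_log (div_pos (by positivity) (hpos p)) h1).trans
        (Stmt9.le_assoc (by positivity) (bddQ _ (by positivity)) p)
    constructor
    · -- 5a
      rw [Asymptotics.isBigO_iff]
      refine ⟨C, ?_⟩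
      filter_upwards [eventually_ge_atTop (M 1)] with x hx
      have hx0 : 0 < x := lt_of_lt_of_le hM1pos hx
      have h1 : assocFun Q x ≤ assocFun M (C * x) := hQM x hx0
      have h2 : M 1 ≤ C * x := le_trans hx (le_mul_of_one_le_left hx0.le hC1)
      have h3 : assocFun M (C * x) ≤ lowerLeg (fun s => assocFun (mSeq M) (1 / s)) (C * x) :=
        Stmt9.key_lower hpos hM0 hM1 hlc hlim h2
      have h4 : lowerLeg (fun s => assocFun (mSeq M) (1 / s)) (C * x) ≤
          C * lowerLeg (fun s => assocFun (mSeq M) (1 / s)) x :=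
        Stmt9.leg_scale hpos hM0 hM1 hlc hlim hC1 hx0.le
      have h0Q : 0 ≤ assocFun Q x :=
        Stmt9.assoc_nonneg (fun h => bddQ x h) hQ0
      have h0L : 0 ≤ lowerLeg (fun s => assocFun (mSeq M) (1 / s)) x :=
        Stmt9.leg_nonneg hpos hM0 hlc hlim hx0.le
      rw [Real.norm_eq_abs, Real.norm_eq_abs, abs_of_nonneg h0Q, abs_of_nonneg h0L]
      linarith
    · -- 5b
      rw [Asymptotics.isBigO_iff]
      refine ⟨2 * (C * Real.exp 1), ?_⟩
      have hCe1 : (1:ℝ) ≤ C * Real.exp 1 := by nlinarith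
      have hCe0 : (0:ℝ) < C * Real.exp 1 := by positivity
      filter_upwards [eventually_ge_atTop
        (max (C * Real.exp 1 * M 1) (Real.exp 1 * Q 1))] with x hx
      have hxa : C * Real.exp 1 * M 1 ≤ x := le_trans (le_max_left _ _) hx
      have hxb : Real.exp 1 * Q 1 ≤ x := le_trans (le_max_right _ _) hx
      have hx0 : 0 < x := lt_of_lt_of_le (mul_pos (mul_pos hC0 (Real.exp_pos 1)) hM1pos) hxa
      have harg : C * Real.exp 1 * (x / (C * Real.exp 1)) = x := by field_simp
      have h1 : lowerLeg (fun s => assocFun (mSeq M) (1 / s)) x ≤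
          C * Real.exp 1 *
            lowerLeg (fun s => assocFun (mSeq M) (1 / s)) (x / (C * Real.exp 1)) := by
        have := Stmt9.leg_scale hpos hM0 hM1 hlc hlim hCe1
          (by positivity : (0:ℝ) ≤ x / (C * Real.exp 1))
        rwa [harg] at this
      have hxe : M 1 ≤ x / (C * Real.exp 1) := by
        rw [le_div_iff₀ hCe0]
        nlinarith
      have h2 : lowerLeg (fun s => assocFun (mSeq M) (1 / s)) (x / (C * Real.exp 1)) ≤
          1 + assocFun M (x / C) := by
        have := Stmt9.key_upper hpos hM0 hM1 hlc hlim hxe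
        have harg2 : Real.exp 1 * (x / (C * Real.exp 1)) = x / C := by
          rw [eq_div_iff hC0.ne']
          field_simp
        rwa [harg2] at this
      have h3 : assocFun M (x / C) ≤ assocFun Q x := by
        have := hMQ (x / C) (by positivity)
        rwa [mul_div_cancel₀ x hC0.ne'] at this
      have h4 : 1 ≤ assocFun Q x := by
        have h5 := Stmt9.le_assoc hx0 (bddQ x hx0) 1
        rw [pow_one, Real.log_div hx0.ne' (hQpos 1).ne'] at h5
        have h6 : Real.log (Real.exp 1 * Q 1) ≤ Real.log x :=
          Real.log_le_log (mul_pos (Real.exp_pos 1) (hQpos 1)) hxb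
        rw [Real.log_mul (Real.exp_ne_zero 1) (hQpos 1).ne', Real.log_exp] at h6
        linarith
      have h0L : 0 ≤ lowerLeg (fun s => assocFun (mSeq M) (1 / s)) x :=
        Stmt9.leg_nonneg hpos hM0 hlc hlim hx0.le
      rw [Real.norm_eq_abs, Real.norm_eq_abs, abs_of_nonneg h0L,
        abs_of_nonneg (by linarith : (0:ℝ) ≤ assocFun Q x)]
      nlinarith [mul_le_mul_of_nonneg_left (by linarith : lowerLeg
          (fun s => assocFun (mSeq M) (1 / s)) (x / (C * Real.exp 1)) ≤
          1 + assocFun Q x) hCe0.le,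
        mul_nonneg hCe0.le (sub_nonneg.2 h4)]
end
end

section
/- Let M=(M_p)_{p∈ℕ} be a sequence of positive reals with M₀=1 such that lim_{p→∞} m_p^{1/p} = ∞, where m_p := M_p/p!. Define L_p := p!·m_p^{lc}. Then the associated function ω_L and the lower Legendre conjugate (ω_m^ι)_⋆ of t ↦ ω_m(1/t) are equivalent weight functions. -/
open Filter MeasureTheory Set Asymptotics Topology

noncomputable section

namespace Stmt10Aux

open Real

lemma bddAbove_of_eventually_nonpos {f : ℕ → ℝ} (h : ∀ᶠ q in atTop, f q ≤ 0) :
    BddAbove (Set.range f) := by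
  obtain ⟨N, hN⟩ := Filter.eventually_atTop.mp h
  refine ⟨((Finset.range (N + 1)).sup' ⟨0, by simp⟩ f) ⊔ 0, ?_⟩
  rintro x ⟨q, rfl⟩
  rcases le_or_gt q N with h' | h'
  · exact le_sup_of_le_left (Finset.le_sup' f (Finset.mem_range.mpr (by omega)))
  · exact le_sup_of_le_right (hN q h'.le)

variable {m : ℕ → ℝ}

def Big (m : ℕ → ℝ) : Prop := ∀ C : ℝ, ∀ᶠ q : ℕ in atTop, C ^ q ≤ m q

lemma big_of (hm : ∀ p, 0 < m p)
    (hlim : Tendsto (fun p : ℕ => m p ^ (1 / (p : ℝ))) atTop atTop) : Big m := by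
  intro C
  filter_upwards [hlim.eventually_ge_atTop (max |C| 1), eventually_ge_atTop 1] with q hq hq1
  have hq0 : q ≠ 0 := by omega
  have hC' : (0:ℝ) ≤ max |C| 1 := le_trans zero_le_one (le_max_right _ _)
  calc C ^ q ≤ |C ^ q| := le_abs_self _
    _ = |C| ^ q := abs_pow C q
    _ ≤ (max |C| 1) ^ q := pow_le_pow_left₀ (abs_nonneg C) (le_max_left _ _) q
    _ ≤ (m q ^ (1 / (q:ℝ))) ^ q := pow_le_pow_left₀ hC' hq q
    _ = m q := by
        rw [one_div]
        exact Real.rpow_inv_natCast_pow (hm q).le hq0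

lemma assocFun_of_pos {t : ℝ} (ht : 0 < t) :
    assocFun m t = sSup (Set.range fun q : ℕ => Real.log (t ^ q / m q)) :=
  if_neg (not_le.mpr ht)

lemma bdd_assoc (hm : ∀ p, 0 < m p) (hbig : Big m) {t : ℝ} (ht : 0 < t) :
    BddAbove (Set.range fun q : ℕ => Real.log (t ^ q / m q)) := by
  apply bddAbove_of_eventually_nonpos
  filter_upwards [hbig t] with q hq
  exact Real.log_nonpos (div_nonneg (by positivity) (hm q).le) ((div_le_one (hm q)).mpr hq)

lemma le_assoc (hm : ∀ p, 0 < m p) (hbig : Big m) {t : ℝ} (ht : 0 < t) (q : ℕ) :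
    Real.log (t ^ q / m q) ≤ assocFun m t := by
  rw [assocFun_of_pos ht]
  exact le_csSup (bdd_assoc hm hbig ht) ⟨q, rfl⟩

lemma assoc_nonneg (hm : ∀ p, 0 < m p) (hbig : Big m) (h0 : m 0 = 1) (t : ℝ) :
    0 ≤ assocFun m t := by
  unfold assocFun
  split_ifs with h
  · exact le_refl 0
  · have ht : 0 < t := not_le.mp h
    have h1 : Real.log (t ^ 0 / m 0) ≤ sSup (Set.range fun q : ℕ => Real.log (t ^ q / m q)) :=
      le_csSup (bdd_assoc hm hbig ht) ⟨0, rfl⟩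
    simpa [h0] using h1

lemma elem_le (hm : ∀ p, 0 < m p) (hbig : Big m) {u : ℝ} (hu : 0 < u) (p : ℕ) :
    u ^ p / Real.exp (assocFun m u) ≤ m p := by
  have h1 : Real.log (u ^ p / m p) ≤ assocFun m u := le_assoc hm hbig hu p
  have h2 : u ^ p / m p ≤ Real.exp (assocFun m u) := by
    rw [← Real.exp_log (div_pos (by positivity) (hm p))]
    exact Real.exp_le_exp.mpr h1
  rw [div_le_iff₀ (Real.exp_pos _)]
  rw [div_le_iff₀ (hm p)] at h2
  rw [mul_comm]
  exact h2

lemma bddAbove_lcr (hm : ∀ p, 0 < m p) (hbig : Big m) (p : ℕ) :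
    BddAbove ((fun u => u ^ p / Real.exp (assocFun m u)) '' Ioi 0) :=
  ⟨m p, by rintro x ⟨u, hu, rfl⟩; exact elem_le hm hbig hu p⟩

lemma le_lcr (hm : ∀ p, 0 < m p) (hbig : Big m) {u : ℝ} (hu : 0 < u) (p : ℕ) :
    u ^ p / Real.exp (assocFun m u) ≤ logConvexReg m p :=
  le_csSup (bddAbove_lcr hm hbig p) ⟨u, hu, rfl⟩

lemma lcr_pos (hm : ∀ p, 0 < m p) (hbig : Big m) (p : ℕ) : 0 < logConvexReg m p :=
  lt_of_lt_of_le (by positivity) (le_lcr hm hbig one_pos p)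

lemma lcr_le_m (hm : ∀ p, 0 < m p) (hbig : Big m) (p : ℕ) : logConvexReg m p ≤ m p :=
  Real.sSup_le (by rintro x ⟨u, hu, rfl⟩; exact elem_le hm hbig hu p) (hm p).le

lemma lcr_zero_le_one (hm : ∀ p, 0 < m p) (hbig : Big m) (h0 : m 0 = 1) :
    logConvexReg m 0 ≤ 1 := by
  apply Real.sSup_le _ zero_le_one
  rintro x ⟨u, hu, rfl⟩
  simp only [pow_zero]
  rw [div_le_one (Real.exp_pos _)]
  exact Real.one_le_exp (assoc_nonneg hm hbig h0 u)

lemma lcr_sq (hm : ∀ p, 0 < m p) (hbig : Big m) (p : ℕ) :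
    logConvexReg m (p+1) ^ 2 ≤ logConvexReg m p * logConvexReg m (p+2) := by
  have hy : (0:ℝ) ≤ logConvexReg m p * logConvexReg m (p+2) :=
    (mul_pos (lcr_pos hm hbig p) (lcr_pos hm hbig (p+2))).le
  have hs : logConvexReg m (p+1) ≤ Real.sqrt (logConvexReg m p * logConvexReg m (p+2)) := by
    apply Real.sSup_le _ (Real.sqrt_nonneg _)
    rintro x ⟨u, hu, rfl⟩
    have hu' : (0:ℝ) < u := hu
    rw [Real.le_sqrt (by positivity) hy]
    have key : (u ^ (p+1) / Real.exp (assocFun m u)) ^ 2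
        = (u ^ p / Real.exp (assocFun m u)) * (u ^ (p+2) / Real.exp (assocFun m u)) := by
      field_simp
      ring
    rw [key]
    exact mul_le_mul (le_lcr hm hbig hu' p) (le_lcr hm hbig hu' (p+2)) (by positivity)
      (lcr_pos hm hbig p).le
  calc logConvexReg m (p+1) ^ 2
      ≤ Real.sqrt (logConvexReg m p * logConvexReg m (p+2)) ^ 2 :=
        pow_le_pow_left₀ (lcr_pos hm hbig (p+1)).le hs 2
    _ = _ := Real.sq_sqrt hy


def mu (m : ℕ → ℝ) (q : ℕ) : ℝ := logConvexReg m (q+1) / logConvexReg m q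

def lam (m : ℕ → ℝ) (q : ℕ) : ℝ := ((q:ℝ) + 1) * mu m q

lemma mu_pos (hm : ∀ p, 0 < m p) (hbig : Big m) (q : ℕ) : 0 < mu m q :=
  div_pos (lcr_pos hm hbig (q+1)) (lcr_pos hm hbig q)

lemma lam_pos (hm : ∀ p, 0 < m p) (hbig : Big m) (q : ℕ) : 0 < lam m q :=
  mul_pos (by positivity) (mu_pos hm hbig q)

lemma mu_mono (hm : ∀ p, 0 < m p) (hbig : Big m) : Monotone (mu m) := by
  apply monotone_nat_of_le_succ
  intro q
  unfold mu
  rw [div_le_div_iff₀ (lcr_pos hm hbig q) (lcr_pos hm hbig (q+1))]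
  nlinarith [lcr_sq hm hbig q]

lemma lam_mono (hm : ∀ p, 0 < m p) (hbig : Big m) : Monotone (lam m) := by
  intro a b hab
  unfold lam
  apply mul_le_mul (by exact_mod_cast by omega) (mu_mono hm hbig hab)
    (mu_pos hm hbig a).le (by positivity)

def Ff (m : ℕ → ℝ) (t : ℝ) (q : ℕ) : ℝ :=
  (q:ℝ) * Real.log t - Real.log ((Nat.factorial q : ℝ) * logConvexReg m q)

lemma log_elem (hm : ∀ p, 0 < m p) (hbig : Big m) {t : ℝ} (ht : 0 < t) (q : ℕ) :
    Real.log (t ^ q / ((Nat.factorial q : ℝ) * logConvexReg m q)) = Ff m t q := by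
  rw [Ff, Real.log_div (pow_ne_zero q ht.ne')
    (mul_pos (by positivity) (lcr_pos hm hbig q)).ne', Real.log_pow]

lemma Ff_succ (hm : ∀ p, 0 < m p) (hbig : Big m) (t : ℝ) (q : ℕ) :
    Ff m t (q+1) = Ff m t q + (Real.log t - Real.log (lam m q)) := by
  have hf : (0:ℝ) < (Nat.factorial q : ℝ) := by positivity
  have h1 : ((Nat.factorial (q+1) : ℕ) : ℝ) * logConvexReg m (q+1)
      = ((Nat.factorial q : ℝ) * logConvexReg m q) * (lam m q) := by
    rw [Nat.factorial_succ, lam, mu]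
    push_cast
    field_simp [(lcr_pos hm hbig q).ne']
  rw [Ff, Ff, h1, Real.log_mul (mul_pos hf (lcr_pos hm hbig q)).ne'
    (lam_pos hm hbig q).ne']
  push_cast
  ring

lemma le_of_steps {F : ℕ → ℝ} {p : ℕ} (h : ∀ j < p, F j ≤ F (j+1)) :
    ∀ q ≤ p, F q ≤ F p := by
  induction p with
  | zero => intro q hq; have : q = 0 := by omega
            subst this; exact le_refl _
  | succ p ih =>
    intro q hq
    rcases Nat.lt_or_ge q (p+1) with h' | h'
    · exact le_trans (ih (fun j hj => h j (by omega)) q (by omega)) (h p (by omega))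
    · have : q = p + 1 := by omega
      subst this; exact le_refl _

lemma ge_of_steps {F : ℕ → ℝ} {p : ℕ} (h : ∀ j ≥ p, F (j+1) ≤ F j) :
    ∀ q ≥ p, F q ≤ F p := by
  intro q hq
  induction q with
  | zero => have : p = 0 := by omega
            subst this; exact le_refl _
  | succ q ih =>
    rcases Nat.lt_or_ge p (q+1) with h' | h'
    · exact le_trans (h q (by omega)) (ih (by omega))
    · have : p = q + 1 := by omega
      subst this; exact le_refl _

lemma bdd_assocL (hm : ∀ p, 0 < m p) (hbig : Big m) {t : ℝ} (ht : 0 < t) :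
    BddAbove (Set.range fun q : ℕ =>
      Real.log (t ^ q / ((Nat.factorial q : ℝ) * logConvexReg m q))) := by
  apply bddAbove_of_eventually_nonpos
  have hev : ∀ᶠ q : ℕ in atTop, Real.exp (assocFun m t) ≤ (q:ℝ) :=
    (tendsto_natCast_atTop_atTop (R := ℝ)).eventually_ge_atTop _
  filter_upwards [hev] with q hq
  have hden : (0:ℝ) < (Nat.factorial q : ℝ) * logConvexReg m q :=
    mul_pos (by positivity) (lcr_pos hm hbig q)
  apply Real.log_nonpos (div_nonneg (by positivity) hden.le)
  rw [div_le_one hden]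
  calc t ^ q = Real.exp (assocFun m t) * (t ^ q / Real.exp (assocFun m t)) := by
        field_simp
    _ ≤ (Nat.factorial q : ℝ) * (t ^ q / Real.exp (assocFun m t)) := by
        apply mul_le_mul_of_nonneg_right _ (by positivity)
        calc Real.exp (assocFun m t) ≤ (q:ℝ) := hq
          _ ≤ (Nat.factorial q : ℝ) := by exact_mod_cast Nat.self_le_factorial q
    _ ≤ (Nat.factorial q : ℝ) * logConvexReg m q :=
        mul_le_mul_of_nonneg_left (le_lcr hm hbig ht q) (by positivity)

lemma assocL_nonneg (hm : ∀ p, 0 < m p) (hbig : Big m) (h0 : m 0 = 1) (t : ℝ) :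
    0 ≤ assocFun (fun q => (Nat.factorial q : ℝ) * logConvexReg m q) t := by
  unfold assocFun
  split_ifs with h
  · exact le_refl 0
  · have ht : 0 < t := not_le.mp h
    refine le_trans ?_ (le_csSup (bdd_assocL hm hbig ht) ⟨0, rfl⟩)
    simp only [pow_zero, Nat.factorial_zero, Nat.cast_one, one_mul]
    exact Real.log_nonneg (one_le_one_div (lcr_pos hm hbig 0) (lcr_zero_le_one hm hbig h0))


lemma lowerLeg_bddBelow (hm : ∀ p, 0 < m p) (hbig : Big m) (h0 : m 0 = 1) {t : ℝ}
    (ht : 0 ≤ t) :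
    BddBelow ((fun s => assocFun m (1/s) + t * s) '' Ioi 0) := by
  refine ⟨0, ?_⟩
  rintro x ⟨s, hs, rfl⟩
  exact add_nonneg (assoc_nonneg hm hbig h0 _) (mul_nonneg ht (le_of_lt hs))

lemma main1 (hm : ∀ p, 0 < m p) (hbig : Big m) (h0 : m 0 = 1) {t : ℝ} (ht : 0 < t) :
    assocFun (fun q => (Nat.factorial q : ℝ) * logConvexReg m q) t
      ≤ lowerLeg (fun s => assocFun m (1 / s)) t := by
  unfold lowerLeg
  apply le_csInf ⟨_, Set.mem_image_of_mem _ (by norm_num : (1:ℝ) ∈ Ioi 0)⟩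
  rintro b ⟨s, hs, rfl⟩
  have hs' : (0:ℝ) < s := hs
  have hu : (0:ℝ) < 1/s := by positivity
  rw [assocFun, if_neg (not_le.mpr ht)]
  apply Real.sSup_le _
    (add_nonneg (assoc_nonneg hm hbig h0 _) (mul_pos ht hs').le)
  rintro x ⟨q, rfl⟩
  have hlcr := le_lcr hm hbig hu q
  have hlog : (q:ℝ) * Real.log (1/s) - assocFun m (1/s) ≤ Real.log (logConvexReg m q) := by
    have h1 : Real.log ((1/s) ^ q / Real.exp (assocFun m (1/s)))
        ≤ Real.log (logConvexReg m q) :=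
      Real.log_le_log (by positivity) hlcr
    rwa [Real.log_div (by positivity) (Real.exp_ne_zero _), Real.log_pow,
      Real.log_exp] at h1
  have hts : 0 < t * s := mul_pos ht hs'
  have hfac : (q:ℝ) * Real.log (t*s) - Real.log (Nat.factorial q : ℝ) ≤ t * s := by
    have h1 : (t*s) ^ q / (Nat.factorial q : ℝ) ≤ Real.exp (t*s) := by
      calc (t*s) ^ q / (Nat.factorial q : ℝ)
          ≤ ∑ i ∈ Finset.range (q+1), (t*s) ^ i / (Nat.factorial i : ℝ) :=
            Finset.single_le_sum (f := fun i => (t*s) ^ i / (Nat.factorial i : ℝ))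
              (fun i _ => by positivity) (Finset.self_mem_range_succ q)
        _ ≤ Real.exp (t*s) := Real.sum_le_exp_of_nonneg hts.le _
    have h2 : Real.log ((t*s) ^ q / (Nat.factorial q : ℝ)) ≤ t * s := by
      calc Real.log ((t*s) ^ q / (Nat.factorial q : ℝ))
          ≤ Real.log (Real.exp (t*s)) := Real.log_le_log (by positivity) h1
        _ = t * s := Real.log_exp _
    rwa [Real.log_div (by positivity) (by positivity), Real.log_pow] at h2
  show Real.log (t ^ q / ((Nat.factorial q : ℝ) * logConvexReg m q))
      ≤ assocFun m (1/s) + t * s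
  rw [Real.log_div (by positivity) (mul_pos (by positivity) (lcr_pos hm hbig q)).ne',
    Real.log_pow, Real.log_mul (by positivity) (lcr_pos hm hbig q).ne']
  have h3 : Real.log (t*s) = Real.log t + Real.log s := Real.log_mul ht.ne' hs'.ne'
  have h4 : Real.log (1/s) = - Real.log s := by
    rw [one_div, Real.log_inv]
  rw [h3] at hfac
  rw [h4] at hlog
  nlinarith [hfac, hlog]

lemma main2 (hm : ∀ p, 0 < m p) (hbig : Big m) (h0 : m 0 = 1) {t : ℝ} (ht0 : 0 < t)
    (ht1 : lam m 0 ≤ t) (ht2 : Real.exp 2 * logConvexReg m 1 ≤ t) :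
    lowerLeg (fun s => assocFun m (1 / s)) t
      ≤ 5 * assocFun (fun q => (Nat.factorial q : ℝ) * logConvexReg m q) t := by
  classical
  set P : ℕ → Prop := fun q => lam m q ≤ t with hP
  set N : ℕ := ⌈t / mu m 0⌉₊ with hN
  set p' : ℕ := Nat.findGreatest P N with hp'
  set pc : ℕ := p' + 1 with hpc
  have hmu0 : 0 < mu m 0 := mu_pos hm hbig 0
  have hspec : lam m p' ≤ t := Nat.findGreatest_spec (Nat.zero_le N) (show P 0 from ht1)
  have hgt : t < lam m pc := by
    rcases lt_or_ge p' N with hlt | hge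
    · by_contra hcon
      push_neg at hcon
      exact Nat.findGreatest_is_greatest (show p' < pc by omega) (by omega)
        (show P pc from hcon)
    · have hpN : p' = N := le_antisymm (Nat.findGreatest_le N) hge
      have h1 : t / mu m 0 ≤ (N:ℝ) := Nat.le_ceil _
      have h2 : t < ((N:ℝ)+1) * mu m 0 := by
        have h3 : t / mu m 0 < (N:ℝ)+1 := lt_of_le_of_lt h1 (by linarith)
        calc t = (t / mu m 0) * mu m 0 := by field_simp
          _ < ((N:ℝ)+1) * mu m 0 := mul_lt_mul_of_pos_right h3 hmu0
      calc t < ((N:ℝ)+1) * mu m 0 := h2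
        _ ≤ ((pc:ℝ)+1) * mu m pc := by
            apply mul_le_mul _ (mu_mono hm hbig (Nat.zero_le pc)) hmu0.le (by positivity)
            have : (N:ℝ) ≤ (pc:ℝ) := by exact_mod_cast by omega
            linarith
        _ = lam m pc := rfl
  set F : ℕ → ℝ := Ff m t with hF
  have hstep : ∀ q, F (q+1) = F q + (Real.log t - Real.log (lam m q)) :=
    fun q => Ff_succ hm hbig t q
  have hup : ∀ j < pc, F j ≤ F (j+1) := by
    intro j hj
    rw [hstep j]
    have hle : lam m j ≤ t := le_trans (lam_mono hm hbig (show j ≤ p' by omega)) hspec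
    have := Real.log_le_log (lam_pos hm hbig j) hle
    linarith
  have hdown : ∀ j ≥ pc, F (j+1) ≤ F j := by
    intro j hj
    rw [hstep j]
    have hle : t ≤ lam m j := le_trans hgt.le (lam_mono hm hbig hj)
    have := Real.log_le_log ht0 hle
    linarith
  have hub : ∀ q, F q ≤ F pc := by
    intro q
    rcases le_or_gt q pc with h | h
    · exact le_of_steps hup q h
    · exact ge_of_steps hdown q h.le
  have hF0 : 0 ≤ F 0 := by
    have : F 0 = - Real.log (logConvexReg m 0) := by
      simp [hF, Ff, Nat.factorial]
    rw [this]
    simp only [neg_nonneg]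
    exact Real.log_nonpos (lcr_pos hm hbig 0).le (lcr_zero_le_one hm hbig h0)
  have hF1 : 2 ≤ F 1 := by
    have hlog : Real.log (Real.exp 2 * logConvexReg m 1) ≤ Real.log t :=
      Real.log_le_log (mul_pos (Real.exp_pos 2) (lcr_pos hm hbig 1)) ht2
    rw [Real.log_mul (Real.exp_ne_zero 2) (lcr_pos hm hbig 1).ne', Real.log_exp] at hlog
    have : F 1 = Real.log t - Real.log (logConvexReg m 1) := by
      simp [hF, Ff, Nat.factorial]
    rw [this]
    linarith
  have hFpc2 : 2 ≤ F pc := le_trans hF1 (hub 1)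
  set k : ℕ := pc / 2 with hk
  have hpck : pc ≤ 2*k + 1 := by omega
  have hklog : (k:ℝ) * Real.log 2 ≤ F k := by
    have step : ∀ j < k, Real.log 2 ≤ Real.log t - Real.log (lam m j) := by
      intro j hj
      have hj2 : lam m j ≤ t/2 := by
        have h1 : mu m j ≤ mu m p' := mu_mono hm hbig (by omega)
        have h2 : ((j:ℝ)+1) ≤ (k:ℝ) := by exact_mod_cast by omega
        have h3 : (2:ℝ) * (k:ℝ) ≤ (pc:ℝ) := by exact_mod_cast by omega
        have h4 : (pc:ℝ) * mu m p' ≤ t := by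
          have he : lam m p' = (pc:ℝ) * mu m p' := by
            rw [lam, hpc]; push_cast; ring
          rw [he] at hspec; exact hspec
        have h5 : lam m j ≤ (k:ℝ) * mu m p' := by
          rw [lam]
          exact mul_le_mul h2 h1 (mu_pos hm hbig j).le (by positivity)
        nlinarith [mu_pos hm hbig p']
      have h6 : (2:ℝ) ≤ t / lam m j := by
        rw [le_div_iff₀ (lam_pos hm hbig j)]; linarith
      have h7 := Real.log_le_log (by norm_num) h6
      rwa [Real.log_div ht0.ne' (lam_pos hm hbig j).ne'] at h7
    have hind : ∀ j, j ≤ k → (j:ℝ) * Real.log 2 ≤ F j := by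
      intro j
      induction j with
      | zero => intro _; simpa using hF0
      | succ j ih =>
        intro hj
        have h1 := ih (by omega)
        rw [hstep j]
        push_cast
        have h2 := step j (by omega)
        linarith
    exact hind k le_rfl
  have hkF : (k:ℝ) * Real.log 2 ≤ F pc := le_trans hklog (hub k)
  have hlog2 : (0.6931471803 : ℝ) < Real.log 2 := Real.log_two_gt_d9
  have hpcbound : (pc:ℝ) + 1 ≤ 4 * F pc := by
    have h1 : (pc:ℝ) ≤ 2*(k:ℝ) + 1 := by exact_mod_cast hpck
    nlinarith [Nat.cast_nonneg (α := ℝ) k]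
  set u : ℝ := t / ((pc:ℝ)+1) with hu
  have hupos : 0 < u := by positivity
  have hmupc : u < mu m pc := by
    have he : lam m pc = ((pc:ℝ)+1) * mu m pc := rfl
    rw [hu, div_lt_iff₀ (by positivity)]
    rw [he] at hgt
    linarith
  have hGq : ∀ q : ℕ, (q:ℝ) * Real.log u - Real.log (logConvexReg m q) ≤ F pc := by
    have hcase1 : ∀ q ≤ pc, (q:ℝ) * Real.log u - Real.log (logConvexReg m q) ≤ F q := by
      intro q hq
      have h1 : Real.log u = Real.log t - Real.log ((pc:ℝ)+1) := by
        rw [hu, Real.log_div ht0.ne' (by positivity)]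
      have h2 : Real.log ((Nat.factorial q : ℝ)) ≤ (q:ℝ) * Real.log ((pc:ℝ)+1) := by
        have hnat : Nat.factorial q ≤ (pc+1)^q :=
          le_trans (Nat.factorial_le_pow q) (Nat.pow_le_pow_left (by omega) q)
        calc Real.log ((Nat.factorial q : ℝ))
            ≤ Real.log ((((pc+1)^q : ℕ)):ℝ) :=
              Real.log_le_log (by positivity) (by exact_mod_cast hnat)
          _ = (q:ℝ) * Real.log ((pc:ℝ)+1) := by
              push_cast
              rw [Real.log_pow]
        -- done
      have h3 : (q:ℝ) * Real.log u = (q:ℝ) * Real.log t - (q:ℝ) * Real.log ((pc:ℝ)+1) := by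
        rw [h1]; ring
      have h4 : F q = (q:ℝ) * Real.log t - Real.log ((Nat.factorial q : ℝ))
          - Real.log (logConvexReg m q) := by
        rw [hF, Ff, Real.log_mul (by positivity) (lcr_pos hm hbig q).ne']
        ring
      rw [h4]
      linarith
    intro q
    rcases le_or_gt q pc with h | h
    · exact le_trans (hcase1 q h) (hub q)
    · have hsteps : ∀ j ≥ pc,
          ((j+1:ℕ):ℝ) * Real.log u - Real.log (logConvexReg m (j+1))
            ≤ (j:ℝ) * Real.log u - Real.log (logConvexReg m j) := by
        intro j hj
        have h1 : u ≤ mu m j := le_trans hmupc.le (mu_mono hm hbig hj)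
        have h2 : Real.log u ≤ Real.log (mu m j) := Real.log_le_log hupos h1
        have h3 : Real.log (mu m j)
            = Real.log (logConvexReg m (j+1)) - Real.log (logConvexReg m j) := by
          rw [mu, Real.log_div (lcr_pos hm hbig (j+1)).ne' (lcr_pos hm hbig j).ne']
        push_cast
        linarith
      have := ge_of_steps
        (F := fun q => (q:ℝ) * Real.log u - Real.log (logConvexReg m q)) (p := pc)
        hsteps q h.le
      exact le_trans this (le_trans (hcase1 pc le_rfl) (hub pc))
  have hassoc : assocFun m u ≤ F pc := by
    rw [assocFun, if_neg (not_le.mpr hupos)]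
    apply Real.sSup_le _ (by linarith)
    rintro x ⟨q, rfl⟩
    have h1 : Real.log (u^q / m q) = (q:ℝ) * Real.log u - Real.log (m q) := by
      rw [Real.log_div (by positivity) (hm q).ne', Real.log_pow]
    have h2 : Real.log (logConvexReg m q) ≤ Real.log (m q) :=
      Real.log_le_log (lcr_pos hm hbig q) (lcr_le_m hm hbig q)
    show Real.log (u^q / m q) ≤ F pc
    rw [h1]
    linarith [hGq q]
  have hmem : assocFun m u + ((pc:ℝ)+1)
      ∈ ((fun s => assocFun m (1/s) + t * s) '' Ioi 0) := by
    refine ⟨((pc:ℝ)+1)/t, Set.mem_Ioi.mpr (by positivity), ?_⟩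
    have hs1 : 1 / (((pc:ℝ)+1)/t) = u := by rw [hu]; field_simp
    have hs2 : t * (((pc:ℝ)+1)/t) = (pc:ℝ)+1 := by field_simp
    simp only [hs1, hs2]
  have hinf : lowerLeg (fun s => assocFun m (1/s)) t ≤ assocFun m u + ((pc:ℝ)+1) :=
    csInf_le (lowerLeg_bddBelow hm hbig h0 ht0.le) hmem
  have hA : F pc ≤ assocFun (fun q => (Nat.factorial q : ℝ) * logConvexReg m q) t := by
    rw [assocFun, if_neg (not_le.mpr ht0)]
    refine le_trans (le_of_eq (log_elem hm hbig ht0 pc).symm)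
      (le_csSup (bdd_assocL hm hbig ht0) ⟨pc, rfl⟩)
  linarith

end Stmt10Aux

/-- With `L_p = p! m_p^{lc}` the weight functions `ω_L` and `(ω_m^ι)_⋆` are
equivalent. -/
theorem stmt10 (M : ℕ → ℝ) (hpos : ∀ p, 0 < M p) (hM0 : M 0 = 1)
    (hlim : Tendsto (fun p : ℕ => mSeq M p ^ (1 / (p : ℝ))) atTop atTop) :
    assocFun (fun p => (Nat.factorial p : ℝ) * logConvexReg (mSeq M) p) =O[atTop]
        lowerLeg (fun s => assocFun (mSeq M) (1 / s)) ∧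
      lowerLeg (fun s => assocFun (mSeq M) (1 / s)) =O[atTop]
        assocFun (fun p => (Nat.factorial p : ℝ) * logConvexReg (mSeq M) p) := by
  have hm : ∀ p, 0 < mSeq M p := fun p =>
    div_pos (hpos p) (by exact_mod_cast Nat.factorial_pos p)
  have h0 : mSeq M 0 = 1 := by simp [mSeq, hM0]
  have hbig : Stmt10Aux.Big (mSeq M) := Stmt10Aux.big_of hm hlim
  constructor
  · rw [Asymptotics.isBigO_iff]
    refine ⟨1, ?_⟩
    filter_upwards [eventually_gt_atTop 0] with t ht
    have h1 := Stmt10Aux.main1 hm hbig h0 ht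
    have h2 := Stmt10Aux.assocL_nonneg hm hbig h0 t
    rw [Real.norm_eq_abs, Real.norm_eq_abs, abs_of_nonneg h2,
      abs_of_nonneg (le_trans h2 h1)]
    linarith
  · rw [Asymptotics.isBigO_iff]
    refine ⟨5, ?_⟩
    filter_upwards [eventually_gt_atTop 0, eventually_ge_atTop (Stmt10Aux.lam (mSeq M) 0),
      eventually_ge_atTop (Real.exp 2 * logConvexReg (mSeq M) 1)] with t ht0 ht1 ht2
    have h1 := Stmt10Aux.main2 hm hbig h0 ht0 ht1 ht2
    have h2 := Stmt10Aux.assocL_nonneg hm hbig h0 t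
    have h3 := Stmt10Aux.main1 hm hbig h0 ht0
    rw [Real.norm_eq_abs, Real.norm_eq_abs, abs_of_nonneg (le_trans h2 h3),
      abs_of_nonneg h2]
    linarith
end
end

section
/- Let ω be a normalized weight function satisfying (ω₃), (ω₄) and (ω₅), and assume ω is equivalent to a concave weight function. Let W^x_p := exp((1/x)φ*_ω(xp)), w^x_p := W^x_p/p!, and define L^x_p := p!·(w^x_p)^{lc}. Then for every x>0 the associated functions ω_{W^x} and ω_{L^x} are equivalent weight functions. -/
open Filter MeasureTheory Set Asymptotics Topology

noncomputable section

lemma aux_pow_le_factorial_mul_exp (p : ℕ) : (p:ℝ)^p ≤ p.factorial * Real.exp p := by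
  induction p with
  | zero => simp
  | succ n ih =>
    have hn1 : (0:ℝ) < (n:ℝ)+1 := by positivity
    have key : ((n:ℝ)+1)^(n+1) ≤ ((n:ℝ)+1) * (n:ℝ)^n * Real.exp 1 := by
      rcases Nat.eq_zero_or_pos n with h0 | hpos
      · subst h0; simp
      · have hn0 : (0:ℝ) < (n:ℝ) := by exact_mod_cast hpos
        have h2 : ((n:ℝ)+1)^n ≤ (n:ℝ)^n * Real.exp 1 := by
          have heq : ((n:ℝ)+1)^n = (n:ℝ)^n * (1 + 1/n)^n := by
            rw [← mul_pow]; congr 1; field_simp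
          rw [heq]
          have h3 : (1 + 1/(n:ℝ))^n ≤ (Real.exp (1/(n:ℝ)))^n := by
            apply pow_le_pow_left₀ (by positivity)
            have := Real.add_one_le_exp (1/(n:ℝ)); linarith
          have h4 : (Real.exp (1/(n:ℝ)))^n = Real.exp 1 := by
            rw [← Real.exp_nat_mul]; rw [mul_one_div, div_self hn0.ne']
          calc (n:ℝ)^n * (1 + 1/n)^n ≤ (n:ℝ)^n * (Real.exp (1/(n:ℝ)))^n := by
                apply mul_le_mul_of_nonneg_left h3 (by positivity)
          _ = (n:ℝ)^n * Real.exp 1 := by rw [h4]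
        calc ((n:ℝ)+1)^(n+1) = ((n:ℝ)+1) * ((n:ℝ)+1)^n := by ring
        _ ≤ ((n:ℝ)+1) * ((n:ℝ)^n * Real.exp 1) := by
            apply mul_le_mul_of_nonneg_left h2 (le_of_lt hn1)
        _ = ((n:ℝ)+1) * (n:ℝ)^n * Real.exp 1 := by ring
    have hfact : ((n+1).factorial : ℝ) = ((n:ℝ)+1) * n.factorial := by
      push_cast [Nat.factorial_succ]; ring
    have hexp : Real.exp ((n:ℕ)+1 : ℕ) = Real.exp n * Real.exp 1 := by
      push_cast; rw [← Real.exp_add]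
    have hfn : (0:ℝ) < n.factorial := by exact_mod_cast n.factorial_pos
    calc ((n+1 : ℕ):ℝ)^(n+1) = ((n:ℝ)+1)^(n+1) := by push_cast; ring
    _ ≤ ((n:ℝ)+1) * (n:ℝ)^n * Real.exp 1 := key
    _ ≤ ((n:ℝ)+1) * (n.factorial * Real.exp n) * Real.exp 1 := by
        have h5 : ((n:ℝ)+1) * (n:ℝ)^n ≤ ((n:ℝ)+1) * (n.factorial * Real.exp n) :=
          mul_le_mul_of_nonneg_left ih (le_of_lt hn1)
        exact mul_le_mul_of_nonneg_right h5 (le_of_lt (Real.exp_pos 1))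
    _ = (((n:ℝ)+1) * n.factorial) * (Real.exp n * Real.exp 1) := by ring
    _ = ((n+1).factorial : ℝ) * Real.exp ((n:ℕ)+1:ℕ) := by rw [hfact, hexp]

-- aux 2 : p*M - log p! ≤ exp M
lemma aux_linear_sub_logfact_le (M : ℝ) (p : ℕ) :
    (p:ℝ) * M - Real.log p.factorial ≤ Real.exp M := by
  rcases Nat.eq_zero_or_pos p with h0 | hpos
  · subst h0; simp [Real.exp_pos M |>.le]
  · have hp : (0:ℝ) < p := by exact_mod_cast hpos
    have hlf : (p:ℝ) * Real.log p - p ≤ Real.log p.factorial := by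
      have h1 : (p:ℝ)^p / Real.exp p ≤ p.factorial := by
        rw [div_le_iff₀ (Real.exp_pos _)]; exact aux_pow_le_factorial_mul_exp p
      have h2 := Real.log_le_log (by positivity) h1
      rw [Real.log_div (by positivity) (Real.exp_ne_zero _), Real.log_pow, Real.log_exp] at h2
      exact_mod_cast h2
    have hc : (0:ℝ) < Real.exp M := Real.exp_pos M
    have hlog : Real.log (Real.exp M / p) ≤ Real.exp M / p - 1 :=
      Real.log_le_sub_one_of_pos (by positivity)
    rw [Real.log_div hc.ne' hp.ne', Real.log_exp] at hlog
    have h3 : (p:ℝ) * (M - Real.log p) ≤ p * (Real.exp M / p - 1) :=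
      mul_le_mul_of_nonneg_left hlog hp.le
    have h4 : (p:ℝ) * (Real.exp M / p) = Real.exp M := by field_simp
    nlinarith [hlf, h3, h4]

/-- For a normalized weight `ω` with `(ω₃)`, `(ω₄)`, `(ω₅)`, equivalent to a concave
weight function, and with `L^x_p = p!(w^x_p)^{lc}` where `w^x_p = W^x_p/p!`, the
associated functions `ω_{W^x}` and `ω_{L^x}` are equivalent for every `x > 0`. -/
theorem stmt11 (ω : ℝ → ℝ) (hω : IsWeightFun ω) (hn : IsNormalized ω)
    (h3 : (fun t => Real.log t) =o[atTop] ω)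
    (h4 : ConvexOn ℝ univ (fun t => ω (Real.exp t)))
    (h5 : ω =o[atTop] (id : ℝ → ℝ))
    (hconc : ∃ κ : ℝ → ℝ, IsWeightFun κ ∧ ConcaveOn ℝ (Ici 0) κ ∧
      ω =O[atTop] κ ∧ κ =O[atTop] ω) :
    ∀ x : ℝ, 0 < x →
      assocFun (Wmat ω x) =O[atTop]
          assocFun (fun p =>
            (Nat.factorial p : ℝ) *
              logConvexReg (fun q => Wmat ω x q / Nat.factorial q) p) ∧
        assocFun (fun p =>
            (Nat.factorial p : ℝ) *
              logConvexReg (fun q => Wmat ω x q / Nat.factorial q) p) =O[atTop]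
          assocFun (Wmat ω x) := by
  intro x hx
  obtain ⟨hωc, hωm, hω0, hωt⟩ := hω
  obtain ⟨κ, ⟨hκc, hκm, hκ0, hκt⟩, hκconc, hOκ, hκO⟩ := hconc
  -- basic facts about ω
  have hωnn : ∀ t : ℝ, 0 ≤ t → 0 ≤ ω t := by
    intro t ht
    have := hωm (Set.self_mem_Ici) (show t ∈ Ici 0 from ht) ht
    rwa [hω0] at this
  have hφnn : ∀ y : ℝ, 0 ≤ ω (Real.exp y) := fun y => hωnn _ (Real.exp_pos y).le
  have hφmono : ∀ {y z : ℝ}, y ≤ z → ω (Real.exp y) ≤ ω (Real.exp z) := by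
    intro y z h
    exact hωm (Real.exp_pos y).le (Real.exp_pos z).le (Real.exp_le_exp.2 h)
  have hφ0 : ω (Real.exp 0) = 0 := by
    rw [Real.exp_zero]; exact hn 1 ⟨zero_le_one, le_rfl⟩
  -- ω₃ concrete
  have h3' : ∀ c : ℝ, 0 < c → ∃ Y : ℝ, ∀ y, Y ≤ y → y ≤ c * ω (Real.exp y) := by
    intro c hc
    have h1 := (Asymptotics.isLittleO_iff.mp h3) hc
    obtain ⟨T, hT⟩ := Filter.eventually_atTop.mp h1
    refine ⟨max T 0, fun y hy => ?_⟩
    have hy0 : 0 ≤ y := le_trans (le_max_right T 0) hy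
    have hey : T ≤ Real.exp y := by
      calc T ≤ max T 0 := le_max_left T 0
      _ ≤ y := hy
      _ ≤ Real.exp y := by linarith [Real.add_one_le_exp y]
    have h2 := hT (Real.exp y) hey
    rw [Real.norm_eq_abs, Real.norm_eq_abs, Real.log_exp,
      abs_of_nonneg hy0, abs_of_nonneg (hφnn y)] at h2
    exact h2
  -- legConj bounded above
  have hbddA : ∀ s : ℝ, 0 ≤ s → BddAbove ((fun y => s * y - ω (Real.exp y)) '' Ici 0) := by
    intro s hs
    obtain ⟨Y, hY⟩ := h3' (1/(s+1)) (by positivity)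
    refine ⟨max (s * max Y 0) 0, ?_⟩
    rintro _ ⟨y, hy, rfl⟩
    simp only
    rcases le_or_gt y (max Y 0) with h | h
    · calc s * y - ω (Real.exp y) ≤ s * y := by linarith [hφnn y]
      _ ≤ s * max Y 0 := mul_le_mul_of_nonneg_left h hs
      _ ≤ max (s * max Y 0) 0 := le_max_left _ _
    · have h1 := hY y (le_trans (le_max_left Y 0) h.le)
      have h2 : (s+1) * y ≤ ω (Real.exp y) := by
        rw [div_mul_eq_mul_div, le_div_iff₀ (by positivity)] at h1
        · linarith [h1]
      have hy0 : 0 ≤ y := le_trans (le_max_right Y 0) h.le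
      calc s * y - ω (Real.exp y) ≤ s * y - (s+1) * y := by linarith
      _ = -y := by ring
      _ ≤ 0 := by linarith
      _ ≤ max (s * max Y 0) 0 := le_max_right _ _
  have hA_ge : ∀ s : ℝ, 0 ≤ s → ∀ y : ℝ, 0 ≤ y →
      s * y - ω (Real.exp y) ≤ legConj ω s := by
    intro s hs y hy
    exact le_csSup (hbddA s hs) ⟨y, hy, rfl⟩
  -- the sequence a p = log W_p
  set a : ℕ → ℝ := fun p => (1 / x) * legConj ω (x * p) with ha_def
  have hxp_nn : ∀ p : ℕ, 0 ≤ x * p := fun p => by positivity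
  have ha_ge : ∀ (p : ℕ) (y : ℝ), 0 ≤ y → (p:ℝ) * y - ω (Real.exp y) / x ≤ a p := by
    intro p y hy
    have h1 := hA_ge (x * p) (hxp_nn p) y hy
    have h2 : (p:ℝ) * y - ω (Real.exp y) / x = (1/x) * (x * p * y - ω (Real.exp y)) := by
      field_simp
    rw [h2, ha_def]
    exact mul_le_mul_of_nonneg_left h1 (by positivity)
  have ha_le : ∀ (p : ℕ) (B : ℝ), (∀ y : ℝ, 0 ≤ y → (p:ℝ) * y - ω (Real.exp y) / x ≤ B) →
      a p ≤ B := by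
    intro p B hB
    have h1 : legConj ω (x * p) ≤ x * B := by
      apply csSup_le ⟨_, Set.mem_image_of_mem _ (Set.self_mem_Ici : (0:ℝ) ∈ Ici 0)⟩
      rintro _ ⟨y, hy, rfl⟩
      have := hB y hy
      have h2 : x * ((p:ℝ) * y - ω (Real.exp y) / x) ≤ x * B :=
        mul_le_mul_of_nonneg_left this hx.le
      calc x * (p:ℝ) * y - ω (Real.exp y) = x * ((p:ℝ) * y - ω (Real.exp y) / x) := by
            field_simp
      _ ≤ x * B := h2
    rw [ha_def]
    calc (1/x) * legConj ω (x * p) ≤ (1/x) * (x * B) :=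
          mul_le_mul_of_nonneg_left h1 (by positivity)
    _ = B := by field_simp
  have ha_nn : ∀ p : ℕ, 0 ≤ a p := by
    intro p
    have := ha_ge p 0 le_rfl
    rw [hφ0] at this; simpa using this
  have ha0 : a 0 = 0 := by
    refine le_antisymm (ha_le 0 0 ?_) (ha_nn 0)
    intro y hy
    have := hφnn y
    have h2 : ω (Real.exp y)/x ≥ 0 := by positivity
    push_cast; linarith
  -- the sequence w
  set w : ℕ → ℝ := fun q => Wmat ω x q / (Nat.factorial q : ℝ) with hw_def
  have hWexp : ∀ p : ℕ, Wmat ω x p = Real.exp (a p) := fun p => rfl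
  have hfact_pos : ∀ q : ℕ, (0:ℝ) < (Nat.factorial q : ℝ) := fun q => by
    exact_mod_cast q.factorial_pos
  have hw_pos : ∀ q : ℕ, 0 < w q := by
    intro q; rw [hw_def]; exact div_pos (Real.exp_pos _) (hfact_pos q)
  have hw0 : w 0 = 1 := by
    rw [hw_def]; simp [hWexp, ha0]
  have hlogw : ∀ q : ℕ, Real.log (w q) = a q - Real.log (Nat.factorial q) := by
    intro q
    rw [show w q = Real.exp (a q) / (Nat.factorial q : ℝ) from rfl,
      Real.log_div (Real.exp_ne_zero _) (hfact_pos q).ne', Real.log_exp]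
  -- concavity scaling constants
  have hκnn : ∀ t : ℝ, 0 ≤ t → 0 ≤ κ t := by
    intro t ht
    have := hκm Set.self_mem_Ici (mem_Ici.2 ht) ht
    rwa [hκ0] at this
  obtain ⟨c₁, hc₁pos, hc₁'⟩ := hOκ.exists_pos
  obtain ⟨T₁, hT₁⟩ := Filter.eventually_atTop.mp hc₁'.bound
  obtain ⟨c₂, hc₂pos, hc₂'⟩ := hκO.exists_pos
  obtain ⟨T₂, hT₂⟩ := Filter.eventually_atTop.mp hc₂'.bound
  obtain ⟨T₅, hT₅⟩ := Filter.eventually_atTop.mp (hωt.eventually_ge_atTop 1)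
  set TT : ℝ := max (max T₁ T₂) (max T₅ 1) with hTT_def
  have hTT1 : (1:ℝ) ≤ TT := le_trans (le_max_right T₅ 1) (le_max_right _ _)
  have hTTpos : (0:ℝ) < TT := lt_of_lt_of_le one_pos hTT1
  set Y₃ : ℝ := Real.log TT + 1 with hY₃_def
  set C₄ : ℝ := c₁ * c₂ with hC₄_def
  have hC₄pos : 0 < C₄ := mul_pos hc₁pos hc₂pos
  have hYTT : ∀ y : ℝ, Y₃ ≤ y → TT ≤ Real.exp y := by
    intro y hy
    calc TT = Real.exp (Real.log TT) := (Real.exp_log hTTpos).symm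
    _ ≤ Real.exp y := Real.exp_le_exp.2 (by rw [hY₃_def] at hy; linarith)
  have hφ1 : ∀ y : ℝ, Y₃ ≤ y → 1 ≤ ω (Real.exp y) := by
    intro y hy
    exact hT₅ _ (le_trans (le_trans (le_max_left T₅ 1) (le_max_right _ _)) (hYTT y hy))
  have hκscale : ∀ t t' : ℝ, 0 < t → t ≤ t' → κ t' ≤ (t'/t) * κ t := by
    intro t t' ht htt'
    have ht' : 0 < t' := lt_of_lt_of_le ht htt'
    have hab : 0 ≤ 1 - t/t' := by
      rw [sub_nonneg]; exact div_le_one_of_le₀ htt' ht'.le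
    have hb : 0 ≤ t/t' := by positivity
    have hsum : (1 - t/t') + t/t' = 1 := by ring
    have h1 := hκconc.2 (Set.self_mem_Ici) (mem_Ici.2 ht'.le) hab hb hsum
    simp only [smul_eq_mul, hκ0, mul_zero, zero_add] at h1
    have harg : t/t' * t' = t := by field_simp
    rw [harg] at h1
    have h2 : (t'/t) * ((t/t') * κ t') ≤ (t'/t) * κ t :=
      mul_le_mul_of_nonneg_left h1 (by positivity)
    calc κ t' = (t'/t) * ((t/t') * κ t') := by field_simp
    _ ≤ (t'/t) * κ t := h2
  have hωscale : ∀ y r : ℝ, Y₃ ≤ y → y ≤ r →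
      ω (Real.exp r) ≤ C₄ * Real.exp (r - y) * ω (Real.exp y) := by
    intro y r hy hyr
    have hty : TT ≤ Real.exp y := hYTT y hy
    have htr : TT ≤ Real.exp r := le_trans hty (Real.exp_le_exp.2 hyr)
    have h1 := hT₁ (Real.exp r) (le_trans (le_trans (le_max_left T₁ T₂) (le_max_left _ _)) htr)
    rw [Real.norm_eq_abs, Real.norm_eq_abs, abs_of_nonneg (hφnn r),
      abs_of_nonneg (hκnn _ (Real.exp_pos r).le)] at h1
    have h2 := hκscale (Real.exp y) (Real.exp r) (Real.exp_pos y) (Real.exp_le_exp.2 hyr)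
    have h3 := hT₂ (Real.exp y) (le_trans (le_trans (le_max_right T₁ T₂) (le_max_left _ _)) hty)
    rw [Real.norm_eq_abs, Real.norm_eq_abs, abs_of_nonneg (hκnn _ (Real.exp_pos y).le),
      abs_of_nonneg (hφnn y)] at h3
    have hrat : Real.exp r / Real.exp y = Real.exp (r - y) := (Real.exp_sub r y).symm
    calc ω (Real.exp r) ≤ c₁ * κ (Real.exp r) := h1
    _ ≤ c₁ * ((Real.exp r / Real.exp y) * κ (Real.exp y)) :=
        mul_le_mul_of_nonneg_left h2 hc₁pos.le
    _ = (c₁ * Real.exp (r - y)) * κ (Real.exp y) := by rw [hrat]; ring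
    _ ≤ (c₁ * Real.exp (r - y)) * (c₂ * ω (Real.exp y)) :=
        mul_le_mul_of_nonneg_left h3 (by positivity)
    _ = C₄ * Real.exp (r - y) * ω (Real.exp y) := by rw [hC₄_def]; ring
  -- key uniform bound for the terms defining ω_w
  have claim3 : ∀ W v : ℝ, Y₃ ≤ W → v ≤ W - 1 - Real.log (C₄ * ω (Real.exp W) / x) →
      ∀ q : ℕ, (q:ℝ) * v - Real.log (w q) ≤ ω (Real.exp W) / x := by
    intro W v hW hv q
    have hφW1 : 1 ≤ ω (Real.exp W) := hφ1 W hW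
    have hφWpos : 0 < ω (Real.exp W) := lt_of_lt_of_le one_pos hφW1
    have hWx_nn : 0 ≤ ω (Real.exp W) / x := by positivity
    have hratpos : 0 < C₄ * ω (Real.exp W) / x := by positivity
    rcases Nat.eq_zero_or_pos q with h0 | hq
    · subst h0
      have hl : Real.log (w 0) = 0 := by rw [hw0, Real.log_one]
      simp only [Nat.cast_zero, zero_mul, hl, sub_zero, zero_sub, neg_zero]
      exact hWx_nn
    · have hq1 : (1:ℝ) ≤ (q:ℝ) := by exact_mod_cast hq
      have hqpos : (0:ℝ) < q := lt_of_lt_of_le one_pos hq1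
      rw [hlogw q]
      have hfq : Real.log (Nat.factorial q) ≤ (q:ℝ) * Real.log q := by
        have h1 : ((Nat.factorial q) : ℝ) ≤ ((q:ℝ))^q := by
          exact_mod_cast Nat.cast_le.2 (Nat.factorial_le_pow q)
        calc Real.log (Nat.factorial q) ≤ Real.log ((q:ℝ)^q) :=
              Real.log_le_log (hfact_pos q) h1
        _ = q * Real.log q := Real.log_pow q q
      set y : ℝ := v + 1 + Real.log q with hy_def
      have hkey : (q:ℝ)*v + (q:ℝ) * Real.log q - a q = (q:ℝ)*y - q - a q := by
        rw [hy_def]; ring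
      by_cases hy0 : 0 ≤ y
      · have h1 := ha_ge q y hy0
        by_cases hyW : y ≤ W
        · have h2 : ω (Real.exp y) ≤ ω (Real.exp W) := hφmono hyW
          have h3 : ω (Real.exp y)/x ≤ ω (Real.exp W)/x := by gcongr
          linarith [hfq, h1, hkey, h3, hqpos]
        · push_neg at hyW
          have h2 := hωscale W y hW hyW.le
          have h3 : Real.exp (y - W) ≤ (q:ℝ) * x / (C₄ * ω (Real.exp W)) := by
            have h4 : y - W ≤ Real.log q - Real.log (C₄ * ω (Real.exp W) / x) := by
              rw [hy_def]; linarith [hv]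
            calc Real.exp (y - W)
                ≤ Real.exp (Real.log q - Real.log (C₄ * ω (Real.exp W)/x)) :=
                  Real.exp_le_exp.2 h4
            _ = (q:ℝ) / (C₄ * ω (Real.exp W)/x) := by
                rw [Real.exp_sub, Real.exp_log hqpos, Real.exp_log hratpos]
            _ = (q:ℝ) * x / (C₄ * ω (Real.exp W)) := by
                field_simp
          have h5 : ω (Real.exp y) ≤ (q:ℝ) * x := by
            calc ω (Real.exp y) ≤ C₄ * Real.exp (y - W) * ω (Real.exp W) := h2
            _ ≤ C₄ * ((q:ℝ)*x/(C₄ * ω (Real.exp W))) * ω (Real.exp W) := by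
                apply mul_le_mul_of_nonneg_right _ hφWpos.le
                exact mul_le_mul_of_nonneg_left h3 hC₄pos.le
            _ = (q:ℝ) * x := by field_simp
          have h6 : ω (Real.exp y)/x ≤ (q:ℝ) := by
            rw [div_le_iff₀ hx]
            linarith [h5]
          linarith [hfq, h1, hkey, h6, hWx_nn]
      · push_neg at hy0
        have hqy : (q:ℝ) * y ≤ 0 := mul_nonpos_of_nonneg_of_nonpos hqpos.le hy0.le
        have han := ha_nn q
        linarith [hfq, hkey, hqy, han, hWx_nn, hqpos]
  -- existence of a good W for any target slope (uses ω₅)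
  have exW : ∀ v₀ : ℝ, ∃ W : ℝ, Y₃ ≤ W ∧
      v₀ ≤ W - 1 - Real.log (C₄ * ω (Real.exp W) / x) := by
    intro v₀
    have hεpos : 0 < x * Real.exp (-(v₀+1)) / C₄ := by positivity
    obtain ⟨T₆, hT₆⟩ := Filter.eventually_atTop.mp ((Asymptotics.isLittleO_iff.mp h5) hεpos)
    set W : ℝ := max Y₃ (Real.log (max T₆ 1) + 1) with hW_def
    have hWY : Y₃ ≤ W := le_max_left _ _
    refine ⟨W, hWY, ?_⟩
    have hmaxpos : (0:ℝ) < max T₆ 1 := lt_of_lt_of_le one_pos (le_max_right T₆ 1)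
    have hWT : T₆ ≤ Real.exp W := by
      have h1 : Real.log (max T₆ 1) + 1 ≤ W := le_max_right _ _
      calc T₆ ≤ max T₆ 1 := le_max_left _ _
      _ = Real.exp (Real.log (max T₆ 1)) := (Real.exp_log hmaxpos).symm
      _ ≤ Real.exp W := Real.exp_le_exp.2 (by linarith)
    have h1 := hT₆ (Real.exp W) hWT
    rw [Real.norm_eq_abs, Real.norm_eq_abs, abs_of_nonneg (hφnn W), id_eq,
      abs_of_nonneg (Real.exp_pos W).le] at h1
    have hφWpos : 0 < ω (Real.exp W) := lt_of_lt_of_le one_pos (hφ1 W hWY)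
    have heq : C₄ * (x * Real.exp (-(v₀+1)) / C₄ * Real.exp W) / x
        = Real.exp (-(v₀+1) + W) := by
      rw [Real.exp_add]
      field_simp
    have h2 : Real.log (C₄ * ω (Real.exp W) / x) ≤ -(v₀+1) + W := by
      have hmono : C₄ * ω (Real.exp W) / x
          ≤ C₄ * (x * Real.exp (-(v₀+1)) / C₄ * Real.exp W) / x := by
        gcongr
      calc Real.log (C₄ * ω (Real.exp W) / x)
          ≤ Real.log (C₄ * (x * Real.exp (-(v₀+1)) / C₄ * Real.exp W) / x) :=
            Real.log_le_log (by positivity) hmono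
      _ = -(v₀+1) + W := by rw [heq, Real.log_exp]
    linarith
  -- ω_w is bounded above at every positive point
  have hwbdd : ∀ t : ℝ, 0 < t → ∃ B : ℝ, 0 ≤ B ∧
      ∀ q : ℕ, Real.log (t^q / w q) ≤ B := by
    intro t ht
    obtain ⟨W, hW1, hW2⟩ := exW (Real.log t)
    refine ⟨ω (Real.exp W)/x, div_nonneg (hφnn W) hx.le, fun q => ?_⟩
    have hterm : Real.log (t^q / w q) = (q:ℝ) * Real.log t - Real.log (w q) := by
      rw [Real.log_div (pow_ne_zero q ht.ne') (hw_pos q).ne', Real.log_pow]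
    rw [hterm]
    exact claim3 W (Real.log t) hW1 hW2 q
  have hwassoc_ge : ∀ t : ℝ, 0 < t → ∀ q : ℕ,
      (q:ℝ) * Real.log t - Real.log (w q) ≤ assocFun w t := by
    intro t ht q
    obtain ⟨B, hB0, hB⟩ := hwbdd t ht
    rw [assocFun, if_neg (not_le.2 ht)]
    have hterm : Real.log (t^q / w q) = (q:ℝ) * Real.log t - Real.log (w q) := by
      rw [Real.log_div (pow_ne_zero q ht.ne') (hw_pos q).ne', Real.log_pow]
    rw [← hterm]
    exact le_csSup ⟨B, by rintro _ ⟨p, rfl⟩; exact hB p⟩ ⟨q, rfl⟩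
  -- logConvexReg facts
  have hlcset_le : ∀ (p : ℕ) (t : ℝ), t ∈ Ioi (0:ℝ) →
      t^p / Real.exp (assocFun w t) ≤ w p := by
    intro p t ht
    have ht' : (0:ℝ) < t := ht
    have h1 := hwassoc_ge t ht' p
    have h2 := Real.exp_le_exp.2 h1
    have h3 : Real.exp ((p:ℝ) * Real.log t - Real.log (w p)) = t^p / w p := by
      rw [Real.exp_sub, Real.exp_log (hw_pos p), ← Real.log_pow, Real.exp_log (pow_pos ht' p)]
    rw [h3] at h2
    rw [div_le_iff₀ (Real.exp_pos _)]
    rw [div_le_iff₀ (hw_pos p)] at h2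
    calc t^p ≤ Real.exp (assocFun w t) * w p := h2
    _ = w p * Real.exp (assocFun w t) := mul_comm _ _
  have hlc_bdd : ∀ p : ℕ,
      BddAbove ((fun t => t ^ p / Real.exp (assocFun w t)) '' Ioi 0) := by
    intro p
    exact ⟨w p, by rintro _ ⟨t, ht, rfl⟩; exact hlcset_le p t ht⟩
  have hlc_le : ∀ p : ℕ, logConvexReg w p ≤ w p := by
    intro p
    apply Real.sSup_le _ (hw_pos p).le
    rintro _ ⟨t, ht, rfl⟩; exact hlcset_le p t ht
  have hlc_pos : ∀ p : ℕ, 0 < logConvexReg w p := by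
    intro p
    have hmem : (1:ℝ)^p / Real.exp (assocFun w 1)
        ∈ ((fun t => t ^ p / Real.exp (assocFun w t)) '' Ioi 0) :=
      ⟨1, by norm_num, rfl⟩
    have h1 := le_csSup (hlc_bdd p) hmem
    have hpos : (0:ℝ) < (1:ℝ)^p / Real.exp (assocFun w 1) := by positivity
    exact lt_of_lt_of_le hpos h1
  have hlc_ge : ∀ (p : ℕ) (v B : ℝ), 0 ≤ B →
      (∀ q : ℕ, (q:ℝ) * v - Real.log (w q) ≤ B) →
      Real.exp ((p:ℝ) * v - B) ≤ logConvexReg w p := by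
    intro p v B hB0 hB
    have h1 : assocFun w (Real.exp v) ≤ B := by
      rw [assocFun, if_neg (not_le.2 (Real.exp_pos v))]
      apply Real.sSup_le _ hB0
      rintro _ ⟨q, rfl⟩
      have hterm : Real.log ((Real.exp v)^q / w q) = (q:ℝ) * v - Real.log (w q) := by
        rw [Real.log_div (pow_ne_zero q (Real.exp_pos v).ne') (hw_pos q).ne',
          Real.log_pow, Real.log_exp]
      show Real.log ((Real.exp v)^q / w q) ≤ B
      rw [hterm]; exact hB q
    have h2 : Real.exp ((p:ℝ)*v - B) ≤ (Real.exp v)^p / Real.exp (assocFun w (Real.exp v)) := by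
      rw [Real.exp_sub]
      have hnum : Real.exp ((p:ℝ)*v) = (Real.exp v)^p := by
        rw [← Real.exp_nat_mul]
      rw [hnum]
      gcongr
    exact le_trans h2 (le_csSup (hlc_bdd p) ⟨Real.exp v, Real.exp_pos v, rfl⟩)
  -- the sequence L
  set L : ℕ → ℝ := fun p => (Nat.factorial p : ℝ) * logConvexReg w p with hL_def
  have hL_pos : ∀ p : ℕ, 0 < L p := fun p => mul_pos (hfact_pos p) (hlc_pos p)
  have hL_le_W : ∀ p : ℕ, L p ≤ Wmat ω x p := by
    intro p
    calc L p ≤ (Nat.factorial p : ℝ) * w p :=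
          mul_le_mul_of_nonneg_left (hlc_le p) (hfact_pos p).le
    _ = Wmat ω x p := by
        rw [show w p = Wmat ω x p / (Nat.factorial p : ℝ) from rfl]
        field_simp
  have hL0_le : L 0 ≤ 1 := by
    calc L 0 ≤ (Nat.factorial 0 : ℝ) * w 0 :=
          mul_le_mul_of_nonneg_left (hlc_le 0) (hfact_pos 0).le
    _ = 1 := by rw [hw0]; norm_num
  have hlogL : ∀ p : ℕ, Real.log (L p)
      = Real.log (Nat.factorial p) + Real.log (logConvexReg w p) :=
    fun p => Real.log_mul (hfact_pos p).ne' (hlc_pos p).ne'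
  -- ω_W upper bound (Lemma A upper) and elementwise bounds
  have hWterm_eq : ∀ (u : ℝ) (p : ℕ),
      Real.log ((Real.exp u)^p / Wmat ω x p) = (p:ℝ)*u - a p := by
    intro u p
    rw [hWexp p, Real.log_div (pow_ne_zero p (Real.exp_pos u).ne') (Real.exp_pos _).ne',
      Real.log_pow, Real.log_exp, Real.log_exp]
  have hWterm_le : ∀ (u:ℝ), 0 ≤ u → ∀ p:ℕ, (p:ℝ)*u - a p ≤ ω (Real.exp u)/x := by
    intro u hu p; linarith [ha_ge p u hu]
  have hWbdd : ∀ u : ℝ, 0 ≤ u →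
      BddAbove (range fun p : ℕ => Real.log ((Real.exp u)^p / Wmat ω x p)) := by
    intro u hu
    refine ⟨ω (Real.exp u)/x, ?_⟩
    rintro _ ⟨p, rfl⟩
    show Real.log ((Real.exp u)^p / Wmat ω x p) ≤ _
    rw [hWterm_eq u p]; exact hWterm_le u hu p
  have hWassoc_le : ∀ u : ℝ, 0 ≤ u →
      assocFun (Wmat ω x) (Real.exp u) ≤ ω (Real.exp u)/x := by
    intro u hu
    rw [assocFun, if_neg (not_le.2 (Real.exp_pos u))]
    apply Real.sSup_le _ (div_nonneg (hφnn u) hx.le)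
    rintro _ ⟨p, rfl⟩
    show Real.log ((Real.exp u)^p / Wmat ω x p) ≤ _
    rw [hWterm_eq u p]; exact hWterm_le u hu p
  have hWassoc_ge : ∀ u : ℝ, 0 ≤ u → ∀ p : ℕ,
      (p:ℝ)*u - a p ≤ assocFun (Wmat ω x) (Real.exp u) := by
    intro u hu p
    rw [assocFun, if_neg (not_le.2 (Real.exp_pos u))]
    rw [← hWterm_eq u p]
    exact le_csSup (hWbdd u hu) ⟨p, rfl⟩
  have hWassoc_nn : ∀ u : ℝ, 0 ≤ u → 0 ≤ assocFun (Wmat ω x) (Real.exp u) := by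
    intro u hu
    have := hWassoc_ge u hu 0
    rw [ha0] at this
    simpa using this
  -- subgradient lower bound : φ(u)/x - u ≤ ω_W(e^u)
  have hWlower : ∀ u : ℝ, 0 ≤ u →
      ω (Real.exp u)/x - u ≤ assocFun (Wmat ω x) (Real.exp u) := by
    intro u hu
    set Sl : Set ℝ := (fun z => (ω (Real.exp z) - ω (Real.exp u)) / (z - u)) '' Ioi u
      with hSl_def
    have hne : Sl.Nonempty := ⟨_, ⟨u+1, by simp only [mem_Ioi]; linarith, rfl⟩⟩
    have hlb : ∀ b ∈ Sl, 0 ≤ b := by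
      rintro _ ⟨z, hz, rfl⟩
      have hz' : u < z := hz
      exact div_nonneg (by linarith [hφmono hz'.le]) (by linarith)
    set s₀ := sInf Sl with hs₀_def
    have hs₀nn : 0 ≤ s₀ := le_csInf hne hlb
    have hbb : BddBelow Sl := ⟨0, hlb⟩
    have hsub : ∀ y : ℝ, 0 ≤ y → s₀ * y - ω (Real.exp y) ≤ s₀ * u - ω (Real.exp u) := by
      intro y hy
      rcases lt_trichotomy y u with h | h | h
      · have hsl : (ω (Real.exp u) - ω (Real.exp y))/(u - y) ≤ s₀ := by
          apply le_csInf hne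
          rintro _ ⟨z, hz, rfl⟩
          have hz' : u < z := hz
          exact h4.slope_mono_adjacent (mem_univ y) (mem_univ z) h hz'
        have h2 : ω (Real.exp u) - ω (Real.exp y) ≤ s₀ * (u - y) := by
          rwa [div_le_iff₀ (by linarith)] at hsl
        have h3 : s₀*(u - y) = s₀*u - s₀*y := mul_sub _ _ _
        linarith
      · rw [h]
      · have hmem : (ω (Real.exp y) - ω (Real.exp u))/(y - u) ∈ Sl := ⟨y, h, rfl⟩
        have hsl := csInf_le hbb hmem
        have h2 : s₀ * (y - u) ≤ ω (Real.exp y) - ω (Real.exp u) := by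
          rwa [le_div_iff₀ (by linarith)] at hsl
        have h3 : s₀*(y - u) = s₀*y - s₀*u := mul_sub _ _ _
        linarith
    set p : ℕ := ⌊s₀ / x⌋₊ with hp_def
    have hp_le : (p:ℝ) * x ≤ s₀ := by
      have h1 : (p:ℝ) ≤ s₀/x := Nat.floor_le (by positivity)
      calc (p:ℝ) * x ≤ (s₀/x) * x := mul_le_mul_of_nonneg_right h1 hx.le
      _ = s₀ := by field_simp
    have hp_gt : s₀/x < (p:ℝ) + 1 := Nat.lt_floor_add_one _
    have hap : a p ≤ (s₀ * u - ω (Real.exp u))/x := by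
      have h1 : legConj ω (x * p) ≤ s₀ * u - ω (Real.exp u) := by
        apply csSup_le ⟨_, Set.mem_image_of_mem _ (Set.self_mem_Ici : (0:ℝ) ∈ Ici 0)⟩
        rintro _ ⟨y, hy, rfl⟩
        show x * (p:ℝ) * y - ω (Real.exp y) ≤ _
        have hy' : (0:ℝ) ≤ y := hy
        have h2 : x * (p:ℝ) * y ≤ s₀ * y := by
          apply mul_le_mul_of_nonneg_right _ hy'
          linarith [hp_le]
        linarith [hsub y hy']
      rw [ha_def]
      calc (1/x) * legConj ω (x * (p:ℕ)) ≤ (1/x) * (s₀ * u - ω (Real.exp u)) :=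
            mul_le_mul_of_nonneg_left h1 (by positivity)
      _ = (s₀ * u - ω (Real.exp u))/x := by ring
    have hterm := hWassoc_ge u hu p
    have h2 : ((s₀/x) - 1) * u ≤ (p:ℝ)*u :=
      mul_le_mul_of_nonneg_right (by linarith [hp_gt]) hu
    have h3 : ((s₀/x) - 1)*u - (s₀*u - ω (Real.exp u))/x = ω (Real.exp u)/x - u := by
      field_simp
      ring
    linarith [hterm, hap, h2, h3]
  -- ω₃ : u ≤ φ(u)/(2x) eventually
  obtain ⟨Y₆, hY₆⟩ := h3' (1/(2*x)) (by positivity)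
  -- main upper bound for terms of ω_L
  have hmainterm : ∀ u : ℝ, max Y₃ 1 ≤ u → ∀ p : ℕ,
      Real.log ((Real.exp u)^p / L p)
        ≤ ((Real.exp 1 * C₄ + 1)/x) * ω (Real.exp u) := by
    intro u hu p
    have huY : Y₃ ≤ u := le_trans (le_max_left _ _) hu
    have hφu1 : 1 ≤ ω (Real.exp u) := hφ1 u huY
    have hφupos : 0 < ω (Real.exp u) := lt_of_lt_of_le one_pos hφu1
    set v : ℝ := u - 1 - Real.log (C₄ * ω (Real.exp u)/x) with hv_def
    have hB := claim3 u v huY le_rfl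
    have hB0 : 0 ≤ ω (Real.exp u)/x := by positivity
    have hterm : Real.log ((Real.exp u)^p / L p) = (p:ℝ)*u - Real.log (L p) := by
      rw [Real.log_div (pow_ne_zero p (Real.exp_pos u).ne') (hL_pos p).ne',
        Real.log_pow, Real.log_exp]
    rw [hterm, hlogL p]
    have h1 := hlc_ge p v (ω (Real.exp u)/x) hB0 hB
    have h2 : (p:ℝ)*v - ω (Real.exp u)/x ≤ Real.log (logConvexReg w p) := by
      have := Real.log_le_log (Real.exp_pos _) h1
      rwa [Real.log_exp] at this
    have h3 := aux_linear_sub_logfact_le (1 + Real.log (C₄ * ω (Real.exp u)/x)) p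
    have h4 : Real.exp (1 + Real.log (C₄ * ω (Real.exp u)/x))
        = Real.exp 1 * (C₄ * ω (Real.exp u)/x) := by
      rw [Real.exp_add, Real.exp_log (by positivity)]
    have h5 : (p:ℝ)*u - (p:ℝ)*v = (p:ℝ)*(1 + Real.log (C₄ * ω (Real.exp u)/x)) := by
      rw [hv_def]; ring
    have h6 : ((Real.exp 1 * C₄ + 1)/x) * ω (Real.exp u)
        = Real.exp 1 * (C₄ * ω (Real.exp u)/x) + ω (Real.exp u)/x := by
      field_simp
    linarith [h2, h3, h4, h5, h6]
  have hLbdd : ∀ u : ℝ, max Y₃ 1 ≤ u →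
      BddAbove (range fun p : ℕ => Real.log ((Real.exp u)^p / L p)) := by
    intro u hu
    refine ⟨((Real.exp 1 * C₄ + 1)/x) * ω (Real.exp u), ?_⟩
    rintro _ ⟨p, rfl⟩
    exact hmainterm u hu p
  have hmain : ∀ u : ℝ, max Y₃ 1 ≤ u →
      assocFun L (Real.exp u) ≤ ((Real.exp 1 * C₄ + 1)/x) * ω (Real.exp u) := by
    intro u hu
    have huY : Y₃ ≤ u := le_trans (le_max_left _ _) hu
    have hφu1 : 1 ≤ ω (Real.exp u) := hφ1 u huY
    rw [assocFun, if_neg (not_le.2 (Real.exp_pos u))]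
    apply Real.sSup_le _ (by positivity)
    rintro _ ⟨p, rfl⟩
    exact hmainterm u hu p
  have hLassoc_nn : ∀ u : ℝ, max Y₃ 1 ≤ u → 0 ≤ assocFun L (Real.exp u) := by
    intro u hu
    rw [assocFun, if_neg (not_le.2 (Real.exp_pos u))]
    have hmem : Real.log ((Real.exp u)^0 / L 0)
        ∈ range fun p : ℕ => Real.log ((Real.exp u)^p / L p) := ⟨0, rfl⟩
    have h1 := le_csSup (hLbdd u hu) hmem
    have h2 : 0 ≤ Real.log ((Real.exp u)^0 / L 0) := by
      rw [pow_zero, Real.log_div one_ne_zero (hL_pos 0).ne', Real.log_one]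
      have := Real.log_nonpos (hL_pos 0).le hL0_le
      linarith
    linarith
  have hWleL : ∀ u : ℝ, max Y₃ 1 ≤ u →
      assocFun (Wmat ω x) (Real.exp u) ≤ assocFun L (Real.exp u) := by
    intro u hu
    rw [assocFun, if_neg (not_le.2 (Real.exp_pos u))]
    apply Real.sSup_le _ (hLassoc_nn u hu)
    rintro _ ⟨p, rfl⟩
    show Real.log ((Real.exp u)^p / Wmat ω x p) ≤ _
    have h1 : (Real.exp u)^p / Wmat ω x p ≤ (Real.exp u)^p / L p := by
      gcongr
      · exact hL_pos p
      · exact hL_le_W p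
    have h2 : Real.log ((Real.exp u)^p / Wmat ω x p) ≤ Real.log ((Real.exp u)^p / L p) :=
      Real.log_le_log (div_pos (pow_pos (Real.exp_pos u) p)
        (by rw [hWexp p]; exact Real.exp_pos _)) h1
    have h3 : Real.log ((Real.exp u)^p / L p) ≤ assocFun L (Real.exp u) := by
      rw [assocFun, if_neg (not_le.2 (Real.exp_pos u))]
      exact le_csSup (hLbdd u hu) ⟨p, rfl⟩
    linarith
  -- final assembly
  set U : ℝ := max (max Y₃ 1) Y₆ with hU_def
  constructor
  · rw [Asymptotics.isBigO_iff]
    refine ⟨1, ?_⟩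
    rw [Filter.eventually_atTop]
    refine ⟨Real.exp U, fun t ht => ?_⟩
    have htpos : 0 < t := lt_of_lt_of_le (Real.exp_pos _) ht
    have hu : U ≤ Real.log t := by
      have h := Real.log_le_log (Real.exp_pos U) ht
      rwa [Real.log_exp] at h
    have hu1 : max Y₃ 1 ≤ Real.log t := le_trans (le_max_left _ _) hu
    have hu0 : 0 ≤ Real.log t := by linarith [le_max_right Y₃ 1, hu1]
    have hteq : Real.exp (Real.log t) = t := Real.exp_log htpos
    rw [one_mul, Real.norm_eq_abs, Real.norm_eq_abs, ← hteq]
    rw [abs_of_nonneg (hWassoc_nn _ hu0), abs_of_nonneg (hLassoc_nn _ hu1)]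
    exact hWleL _ hu1
  · rw [Asymptotics.isBigO_iff]
    refine ⟨2*(Real.exp 1 * C₄ + 1), ?_⟩
    rw [Filter.eventually_atTop]
    refine ⟨Real.exp U, fun t ht => ?_⟩
    have htpos : 0 < t := lt_of_lt_of_le (Real.exp_pos _) ht
    have hu : U ≤ Real.log t := by
      have h := Real.log_le_log (Real.exp_pos U) ht
      rwa [Real.log_exp] at h
    have hu1 : max Y₃ 1 ≤ Real.log t := le_trans (le_max_left _ _) hu
    have hu6 : Y₆ ≤ Real.log t := le_trans (le_max_right _ _) hu
    have hu0 : 0 ≤ Real.log t := by linarith [le_max_right Y₃ 1, hu1]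
    have hteq : Real.exp (Real.log t) = t := Real.exp_log htpos
    rw [Real.norm_eq_abs, Real.norm_eq_abs, ← hteq]
    rw [abs_of_nonneg (hLassoc_nn _ hu1), abs_of_nonneg (hWassoc_nn _ hu0)]
    have h1 := hmain (Real.log t) hu1
    have h2 := hWlower (Real.log t) hu0
    have h3 := hY₆ (Real.log t) hu6
    have heq2 : 1/(2*x) * ω (Real.exp (Real.log t)) = ω (Real.exp (Real.log t))/x/2 := by
      ring
    have h4 : 2*(Real.log t) ≤ ω (Real.exp (Real.log t))/x := by linarith
    have h5 : ω (Real.exp (Real.log t))/x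
        ≤ 2 * assocFun (Wmat ω x) (Real.exp (Real.log t)) := by linarith
    have h6 : (0:ℝ) ≤ Real.exp 1 * C₄ + 1 := by positivity
    calc assocFun L (Real.exp (Real.log t))
        ≤ ((Real.exp 1 * C₄ + 1)/x) * ω (Real.exp (Real.log t)) := h1
    _ = (Real.exp 1 * C₄ + 1) * (ω (Real.exp (Real.log t))/x) := by ring
    _ ≤ (Real.exp 1 * C₄ + 1) * (2 * assocFun (Wmat ω x) (Real.exp (Real.log t))) :=
        mul_le_mul_of_nonneg_left h5 h6
    _ = 2*(Real.exp 1 * C₄ + 1) * assocFun (Wmat ω x) (Real.exp (Real.log t)) := by ring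
end
end
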